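/- arXiv:1905.07439 — 6 statements merged into one kernel-verified Lean document; each statement's English description precedes it below -/
import Mathlib

section
/- For all A, B ∈ ℝ^{mn×mn}, the bilinear computation f satisfies ‖f(A,B) − A·B‖ ≤ ‖A‖ · ‖B‖ · ‖Y − X‖, where ‖·‖ denotes the Frobenius norm. -/
open scoped BigOperators Matrix

/-- Frobenius norm of a real matrix. -/
noncomputable def frob {ι κ : Type*} [Fintype ι] [Fintype κ] (A : Matrix ι κ ℝ) : ℝ :=
  Real.sqrt (∑ i, ∑ j, (A i j) ^ 2)

/-- Frobenius norm of a 6-mode tensor. -/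
noncomputable def frob6 {n : ℕ} (T : Fin n → Fin n → Fin n → Fin n → Fin n → Fin n → ℝ) : ℝ :=
  Real.sqrt (∑ k, ∑ l, ∑ k', ∑ l', ∑ i, ∑ j, (T k l k' l' i j) ^ 2)

/-- The 6-mode tensor Y with entries y_{klk'l'ij} = Σ_r u_{klr} v_{k'l'r} w_{ijr}. -/
noncomputable def Ytens {n R : ℕ} (U V W : Fin n → Fin n → Fin R → ℝ) :
    Fin n → Fin n → Fin n → Fin n → Fin n → Fin n → ℝ :=
  fun k l k' l' i j => ∑ r, U k l r * V k' l' r * W i j r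

/-- The exact matrix-multiplication tensor X, x_{klk'l'ij} = δ_{ki} δ_{l'j} δ_{lk'}. -/
def Xtens (n : ℕ) : Fin n → Fin n → Fin n → Fin n → Fin n → Fin n → ℝ :=
  fun k l k' l' i j =>
    (if k = i then (1 : ℝ) else 0) * (if l' = j then (1 : ℝ) else 0) *
      (if l = k' then (1 : ℝ) else 0)

/-- The block bilinear computation f on (mn)×(mn) matrices indexed by Fin n × Fin m
(first index: block position, second index: position within the m×m block). -/
noncomputable def blinf {n R m : ℕ} (U V W : Fin n → Fin n → Fin R → ℝ)
    (A B : Matrix (Fin n × Fin m) (Fin n × Fin m) ℝ) :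
    Matrix (Fin n × Fin m) (Fin n × Fin m) ℝ :=
  fun p q => ∑ r, W p.1 q.1 r *
    ∑ z, (∑ k, ∑ l, U k l r * A (k, p.2) (l, z)) *
         (∑ k', ∑ l', V k' l' r * B (k', z) (l', q.2))

/-- κ = n⁻³ Σ_{i,j,l} (1 − Σ_r u_{ilr} v_{ljr} w_{ijr}). -/
noncomputable def kappa {n R : ℕ} (U V W : Fin n → Fin n → Fin R → ℝ) : ℝ :=
  ((n : ℝ) ^ 3)⁻¹ * ∑ i, ∑ j, ∑ l, (1 - ∑ r, U i l r * V l j r * W i j r)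

/-- M = P S : block matrix with m×m block s(j)·I_m at block position (π(j), j). -/
def Mmat {n : ℕ} (m : ℕ) (s : Fin n → ℝ) (π : Equiv.Perm (Fin n)) :
    Matrix (Fin n × Fin m) (Fin n × Fin m) ℝ :=
  fun p q => if p.1 = π q.1 ∧ p.2 = q.2 then s q.1 else 0

/-- The randomized bilinear computation f̂(A,B) = (1−κ)⁻¹ M₁ᵀ f(M₁AM₂ᵀ, M₂BM₃ᵀ) M₃. -/
noncomputable def fhat {n R : ℕ} (m : ℕ) (U V W : Fin n → Fin n → Fin R → ℝ)
    (s₁ s₂ s₃ : Fin n → ℝ) (π₁ π₂ π₃ : Equiv.Perm (Fin n))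
    (A B : Matrix (Fin n × Fin m) (Fin n × Fin m) ℝ) :
    Matrix (Fin n × Fin m) (Fin n × Fin m) ℝ :=
  (1 - kappa U V W)⁻¹ •
    ((Mmat m s₁ π₁)ᵀ *
      blinf U V W (Mmat m s₁ π₁ * A * (Mmat m s₂ π₂)ᵀ) (Mmat m s₂ π₂ * B * (Mmat m s₃ π₃)ᵀ) *
      Mmat m s₃ π₃)

/-! The error `f(A, B) - A B` is the block bilinear map of the tensor `E = Y - X`, whose `(i, j)`
block is `∑ e_{k l k' l' i j} A_{k l} B_{k' l'}`. Cauchy–Schwarz over `(k, l, k', l')`, and then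
over the inner index of each block product, bounds the square of an entry by
`(∑ e²) · (row norm of A)² · (column norm of B)²`; summed over all entries, the three factors
separate into `‖E‖² ‖A‖² ‖B‖²`. -/

theorem Fintype.sum_comm_four {ι α β γ δ M : Type*} [Fintype ι] [Fintype α] [Fintype β]
    [Fintype γ] [Fintype δ] [AddCommMonoid M] (f : ι → α → β → γ → δ → M) :
    ∑ r, ∑ a, ∑ b, ∑ c, ∑ d, f r a b c d = ∑ a, ∑ b, ∑ c, ∑ d, ∑ r, f r a b c d := by
  rw [Finset.sum_comm]
  refine Fintype.sum_congr _ _ fun a => ?_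
  rw [Finset.sum_comm]
  refine Fintype.sum_congr _ _ fun b => ?_
  rw [Finset.sum_comm]
  exact Fintype.sum_congr _ _ fun c => Finset.sum_comm

theorem Fintype.sum_sum_mul_sum_sum {α β γ δ : Type*} [Fintype α] [Fintype β] [Fintype γ]
    [Fintype δ] (x : α → β → ℝ) (y : γ → δ → ℝ) :
    (∑ a, ∑ b, x a b) * (∑ c, ∑ d, y c d) = ∑ a, ∑ b, ∑ c, ∑ d, x a b * y c d := by
  simp_rw [Finset.sum_mul]
  simp_rw [Finset.mul_sum]

theorem Fintype.sum4_mul_sq_le_sq_mul_sq {α β γ δ : Type*} [Fintype α] [Fintype β] [Fintype γ]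
    [Fintype δ] (f g : α → β → γ → δ → ℝ) :
    (∑ a, ∑ b, ∑ c, ∑ d, f a b c d * g a b c d) ^ 2 ≤
      (∑ a, ∑ b, ∑ c, ∑ d, f a b c d ^ 2) * ∑ a, ∑ b, ∑ c, ∑ d, g a b c d ^ 2 := by
  simpa only [Fintype.sum_prod_type] using
    Finset.sum_mul_sq_le_sq_mul_sq Finset.univ
      (fun t : α × β × γ × δ => f t.1 t.2.1 t.2.2.1 t.2.2.2) (fun t => g t.1 t.2.1 t.2.2.1 t.2.2.2)

theorem Fintype.sum_prod_sum_prod_mul {α β : Type*} [Fintype α] [Fintype β]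
    (F : α → α → ℝ) (G : β → β → ℝ) :
    ∑ p : α × β, ∑ q : α × β, F p.1 q.1 * G p.2 q.2 = (∑ i, ∑ j, F i j) * ∑ a, ∑ b, G a b := by
  simp only [Fintype.sum_prod_type, Finset.sum_mul_sum]

theorem frob_sq {ι κ : Type*} [Fintype ι] [Fintype κ] (A : Matrix ι κ ℝ) :
    frob A ^ 2 = ∑ i, ∑ j, A i j ^ 2 :=
  Real.sq_sqrt (by positivity)

theorem frob6_sq {n : ℕ} (T : Fin n → Fin n → Fin n → Fin n → Fin n → Fin n → ℝ) :
    frob6 T ^ 2 = ∑ k, ∑ l, ∑ k', ∑ l', ∑ i, ∑ j, T k l k' l' i j ^ 2 :=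
  Real.sq_sqrt (by positivity)

def blockBilin {n m : ℕ} (T : Fin n → Fin n → Fin n → Fin n → Fin n → Fin n → ℝ)
    (A B : Matrix (Fin n × Fin m) (Fin n × Fin m) ℝ) :
    Matrix (Fin n × Fin m) (Fin n × Fin m) ℝ :=
  fun p q => ∑ k, ∑ l, ∑ k', ∑ l', T k l k' l' p.1 q.1 *
    ∑ z, A (k, p.2) (l, z) * B (k', z) (l', q.2)

theorem blockBilin_sub {n m : ℕ}
    (T T' : Fin n → Fin n → Fin n → Fin n → Fin n → Fin n → ℝ)
    (A B : Matrix (Fin n × Fin m) (Fin n × Fin m) ℝ) :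
    blockBilin (T - T') A B = blockBilin T A B - blockBilin T' A B := by
  ext p q
  simp only [blockBilin, Pi.sub_apply, Matrix.sub_apply, sub_mul, Finset.sum_sub_distrib]

theorem blockBilin_Xtens {n m : ℕ} (A B : Matrix (Fin n × Fin m) (Fin n × Fin m) ℝ) :
    blockBilin (Xtens n) A B = A * B := by
  ext p q
  simp [blockBilin, Xtens, Matrix.mul_apply, Fintype.sum_prod_type]

theorem blinf_eq_blockBilin {n R m : ℕ} (U V W : Fin n → Fin n → Fin R → ℝ)
    (A B : Matrix (Fin n × Fin m) (Fin n × Fin m) ℝ) :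
    blinf U V W A B = blockBilin (Ytens U V W) A B := by
  ext p q
  simp only [blinf, blockBilin, Ytens]
  simp_rw [Fintype.sum_sum_mul_sum_sum, Finset.sum_mul_sum, Finset.mul_sum]
  -- move the sum over the inner index `z` past the four block indices, then the rank sum `r`
  simp only [Fintype.sum_comm_four (ι := Fin m)]
  rw [Fintype.sum_comm_four]
  iterate 6 refine Fintype.sum_congr _ _ fun _ => ?_
  ring

theorem sq_blockBilin_apply_le {n m : ℕ}
    (T : Fin n → Fin n → Fin n → Fin n → Fin n → Fin n → ℝ)
    (A B : Matrix (Fin n × Fin m) (Fin n × Fin m) ℝ) (p q : Fin n × Fin m) :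
    blockBilin T A B p q ^ 2 ≤ (∑ k, ∑ l, ∑ k', ∑ l', T k l k' l' p.1 q.1 ^ 2) *
      ((∑ k, ∑ l, ∑ z, A (k, p.2) (l, z) ^ 2) *
        ∑ k', ∑ l', ∑ z, B (k', z) (l', q.2) ^ 2) := by
  rw [Fintype.sum_sum_mul_sum_sum]
  refine (Fintype.sum4_mul_sq_le_sq_mul_sq _ _).trans ?_
  gcongr
  exact Finset.sum_mul_sq_le_sq_mul_sq _ _ _

theorem sum_sum_sq_blockBilin_le {n m : ℕ}
    (T : Fin n → Fin n → Fin n → Fin n → Fin n → Fin n → ℝ)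
    (A B : Matrix (Fin n × Fin m) (Fin n × Fin m) ℝ) :
    ∑ p, ∑ q, blockBilin T A B p q ^ 2 ≤ frob6 T ^ 2 * (frob A ^ 2 * frob B ^ 2) := by
  refine (Finset.sum_le_sum fun p _ => Finset.sum_le_sum fun q _ =>
    sq_blockBilin_apply_le T A B p q).trans_eq ?_
  rw [Fintype.sum_prod_sum_prod_mul (fun i j => ∑ k, ∑ l, ∑ k', ∑ l', T k l k' l' i j ^ 2)
    (fun a b => (∑ k, ∑ l, ∑ z, A (k, a) (l, z) ^ 2) *
      ∑ k', ∑ l', ∑ z, B (k', z) (l', b) ^ 2),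
    ← Finset.sum_mul_sum, frob6_sq, frob_sq, frob_sq]
  congr 1
  · exact (Fintype.sum_congr _ _ fun i => Fintype.sum_comm_four _).trans (Fintype.sum_comm_four _)
  congr 1
  · simp only [Fintype.sum_prod_type]
    exact Finset.sum_comm
  · simp only [Fintype.sum_prod_type]
    rw [Finset.sum_comm]
    refine Fintype.sum_congr _ _ fun k' => ?_
    rw [Finset.sum_comm_cycle]
    exact Fintype.sum_congr _ _ fun z => Finset.sum_comm

theorem frob_blockBilin_le {n m : ℕ}
    (T : Fin n → Fin n → Fin n → Fin n → Fin n → Fin n → ℝ)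
    (A B : Matrix (Fin n × Fin m) (Fin n × Fin m) ℝ) :
    frob (blockBilin T A B) ≤ frob A * frob B * frob6 T := by
  rw [frob, Real.sqrt_le_left (by unfold frob frob6; positivity)]
  calc _ ≤ frob6 T ^ 2 * (frob A ^ 2 * frob B ^ 2) := sum_sum_sq_blockBilin_le T A B
    _ = (frob A * frob B * frob6 T) ^ 2 := by ring

theorem stmt0_general (n R m : ℕ)
    (U V W : Fin n → Fin n → Fin R → ℝ)
    (A B : Matrix (Fin n × Fin m) (Fin n × Fin m) ℝ) :
    frob (blinf U V W A B - A * B) ≤ frob A * frob B * frob6 (Ytens U V W - Xtens n) := by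
  rw [blinf_eq_blockBilin, ← blockBilin_Xtens A B, ← blockBilin_sub]
  exact frob_blockBilin_le _ A B

theorem stmt0 (n R m : ℕ) (hn : 0 < n) (hR : 0 < R) (hm : 1 ≤ m)
    (U V W : Fin n → Fin n → Fin R → ℝ)
    (A B : Matrix (Fin n × Fin m) (Fin n × Fin m) ℝ) :
    frob (blinf U V W A B - A * B) ≤ frob A * frob B * frob6 (Ytens U V W - Xtens n) :=
  stmt0_general n R m U V W A B
end

section
/- Assume κ ≠ 1. For every choice of sign functions s_1,s_2,s_3 : {1,…,n} → {−1,+1} and permutations π_1,π_2,π_3 of {1,…,n}, and for all A, B ∈ ℝ^{mn×mn}, the randomized computation satisfies ‖f̂(A,B) − A·B‖ ≤ ‖A‖ · ‖B‖ · ‖(1−κ)^{-1} Y − X‖. -/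
open scoped BigOperators Matrix

/-! Contracting the blocks of `A` and `B` against a 6-mode tensor `T` gives a bilinear map
`F_T`, linear in `T`, with `F_Y = f` and `F_X (A, B) = A * B`; hence, by orthogonality of the
signed block permutations `Mᵢ`, `f̂(A, B) - A * B = M₁ᵀ F_T(M₁AM₂ᵀ, M₂BM₃ᵀ) M₃` with
`T = (1 - κ)⁻¹ Y - X`. Orthogonal factors do not change Frobenius norms, and after reshaping,
`F_T(A, B)` is the product of `T` (an `n⁴ × n²` matrix, transposed) with a rearrangement of a
product of rearrangements of `A` and `B`, so submultiplicativity of the Frobenius norm, applied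
twice, gives `‖F_T(A, B)‖ ≤ ‖T‖ ‖A‖ ‖B‖`. -/

open Finset Matrix

section Frobenius

variable {ι κ μ ι' κ' : Type*} [Fintype ι] [Fintype κ] [Fintype μ] [Fintype ι'] [Fintype κ']

lemma frob_nonneg (A : Matrix ι κ ℝ) : 0 ≤ frob A :=
  Real.sqrt_nonneg _

lemma frob_eq_of_equiv (e : ι × κ ≃ ι' × κ') {A : Matrix ι κ ℝ} {B : Matrix ι' κ' ℝ}
    (h : ∀ x, B (e x).1 (e x).2 = A x.1 x.2) : frob A = frob B := by
  unfold frob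
  simp only [← Fintype.sum_prod_type']
  exact congrArg Real.sqrt (Fintype.sum_equiv e _ _ fun x => by rw [h])

lemma frob_transpose (A : Matrix ι κ ℝ) : frob Aᵀ = frob A :=
  frob_eq_of_equiv (Equiv.prodComm κ ι) fun _ => rfl

attribute [local instance] Matrix.frobeniusNormedAddCommGroup in
lemma frob_eq_norm (A : Matrix ι κ ℝ) : frob A = ‖A‖ := by
  simp [frob, frobenius_norm_def, Real.sqrt_eq_rpow]

attribute [local instance] Matrix.frobeniusNormedAddCommGroup in
lemma frob_mul_le (A : Matrix ι κ ℝ) (B : Matrix κ μ ℝ) : frob (A * B) ≤ frob A * frob B := by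
  simpa only [frob_eq_norm] using frobenius_norm_mul A B

lemma frob_sq_eq_trace (A : Matrix ι κ ℝ) : frob A ^ 2 = trace (Aᵀ * A) := by
  rw [frob, Real.sq_sqrt (by positivity), Finset.sum_comm]
  simp [trace, mul_apply, sq]

variable [DecidableEq ι]

lemma transpose_mem_orthogonalGroup {R : Type*} [CommRing R] {M : Matrix ι ι R}
    (hM : M ∈ orthogonalGroup ι R) : Mᵀ ∈ orthogonalGroup ι R := by
  rwa [mem_orthogonalGroup_iff', transpose_transpose, ← mem_orthogonalGroup_iff]

lemma frob_orthogonal_mul {M : Matrix ι ι ℝ} (hM : M ∈ orthogonalGroup ι ℝ)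
    (C : Matrix ι κ ℝ) : frob (M * C) = frob C := by
  refine (sq_eq_sq₀ (frob_nonneg _) (frob_nonneg _)).1 ?_
  rw [frob_sq_eq_trace, frob_sq_eq_trace, transpose_mul, Matrix.mul_assoc,
    ← Matrix.mul_assoc Mᵀ, (mem_orthogonalGroup_iff' ι ℝ).1 hM, Matrix.one_mul]

lemma frob_mul_orthogonal {M : Matrix ι ι ℝ} (hM : M ∈ orthogonalGroup ι ℝ)
    (C : Matrix κ ι ℝ) : frob (C * M) = frob C := by
  rw [← frob_transpose, transpose_mul, frob_orthogonal_mul (transpose_mem_orthogonalGroup hM),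
    frob_transpose]

end Frobenius

section TensorBilin

variable {n R m : ℕ}

noncomputable def tensorBilin (T : Fin n → Fin n → Fin n → Fin n → Fin n → Fin n → ℝ)
    (A B : Matrix (Fin n × Fin m) (Fin n × Fin m) ℝ) :
    Matrix (Fin n × Fin m) (Fin n × Fin m) ℝ :=
  fun p q => ∑ k, ∑ l, ∑ k', ∑ l', T k l k' l' p.1 q.1 *
    ∑ z, A (k, p.2) (l, z) * B (k', z) (l', q.2)

lemma blinf_eq_tensorBilin (U V W : Fin n → Fin n → Fin R → ℝ)
    (A B : Matrix (Fin n × Fin m) (Fin n × Fin m) ℝ) :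
    blinf U V W A B = tensorBilin (Ytens U V W) A B := by
  ext p q
  simp only [blinf, tensorBilin, Ytens, sum_mul]
  simp only [mul_sum]
  simp_rw [sum_comm (s := (univ : Finset (Fin R)))]
  simp_rw [sum_comm (s := (univ : Finset (Fin m)))]
  congr! 6 with k l k' l' r z
  ring

lemma tensorBilin_Xtens (A B : Matrix (Fin n × Fin m) (Fin n × Fin m) ℝ) :
    tensorBilin (Xtens n) A B = A * B := by
  ext p q
  simp [tensorBilin, Xtens, mul_apply, Fintype.sum_prod_type]

lemma tensorBilin_smul_sub (c : ℝ) (T T' : Fin n → Fin n → Fin n → Fin n → Fin n → Fin n → ℝ)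
    (A B : Matrix (Fin n × Fin m) (Fin n × Fin m) ℝ) :
    tensorBilin (c • T - T') A B = c • tensorBilin T A B - tensorBilin T' A B := by
  ext p q
  simp [tensorBilin, sub_mul, sum_sub_distrib, mul_sum, mul_assoc]

lemma frob_tensorBilin_le (T : Fin n → Fin n → Fin n → Fin n → Fin n → Fin n → ℝ)
    (A B : Matrix (Fin n × Fin m) (Fin n × Fin m) ℝ) :
    frob (tensorBilin T A B) ≤ frob6 T * frob A * frob B := by
  let Tm : Matrix (Fin n × Fin n × Fin n × Fin n) (Fin n × Fin n) ℝ :=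
    of fun x ij => T x.1 x.2.1 x.2.2.1 x.2.2.2 ij.1 ij.2
  let Am : Matrix (Fin n × Fin n × Fin m) (Fin m) ℝ := of fun x z => A (x.1, x.2.2) (x.2.1, z)
  let Bm : Matrix (Fin m) (Fin n × Fin n × Fin m) ℝ := of fun z x => B (x.1, z) (x.2.1, x.2.2)
  let Pm : Matrix (Fin n × Fin n × Fin n × Fin n) (Fin m × Fin m) ℝ :=
    of fun x ab => (Am * Bm) (x.1, x.2.1, ab.1) (x.2.2.1, x.2.2.2, ab.2)
  have hG : frob (tensorBilin T A B) = frob (Tmᵀ * Pm) :=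
    frob_eq_of_equiv (Equiv.prodProdProdComm _ _ _ _) fun _ => by
      simp [Tm, Pm, Am, Bm, tensorBilin, mul_apply, Fintype.sum_prod_type]
  have hT : frob Tm = frob6 T := by
    simp [Tm, frob, frob6, Fintype.sum_prod_type]
  have hP : frob Pm = frob (Am * Bm) :=
    frob_eq_of_equiv ⟨fun y => ((y.1.1, y.1.2.1, y.2.1), (y.1.2.2.1, y.1.2.2.2, y.2.2)),
      fun y => ((y.1.1, y.1.2.1, y.2.1, y.2.2.1), (y.1.2.2, y.2.2.2)),
      fun _ => rfl, fun _ => rfl⟩ fun _ => rfl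
  have hA : frob Am = frob A :=
    frob_eq_of_equiv ⟨fun y => ((y.1.1, y.1.2.2), (y.1.2.1, y.2)),
      fun y => ((y.1.1, y.2.1, y.1.2), y.2.2), fun _ => rfl, fun _ => rfl⟩ fun _ => rfl
  have hB : frob Bm = frob B :=
    frob_eq_of_equiv ⟨fun y => ((y.2.1, y.1), (y.2.2.1, y.2.2.2)),
      fun y => (y.1.2, (y.1.1, y.2.1, y.2.2)), fun _ => rfl, fun _ => rfl⟩ fun _ => rfl
  calc frob (tensorBilin T A B) = frob (Tmᵀ * Pm) := hG
    _ ≤ frob Tmᵀ * frob Pm := frob_mul_le _ _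
    _ ≤ frob6 T * (frob A * frob B) := by
      rw [frob_transpose, hT, hP, ← hA, ← hB]
      gcongr
      · exact Real.sqrt_nonneg _
      · exact frob_mul_le Am Bm
    _ = frob6 T * frob A * frob B := (mul_assoc _ _ _).symm

end TensorBilin

lemma Mmat_mem_orthogonalGroup {n : ℕ} (m : ℕ) {s : Fin n → ℝ} (π : Equiv.Perm (Fin n))
    (hs : ∀ j, s j = 1 ∨ s j = -1) : Mmat m s π ∈ orthogonalGroup (Fin n × Fin m) ℝ := by
  let σ := Equiv.prodCongr π (Equiv.refl (Fin m))
  have hM : ∀ p q, Mmat m s π p q = if p = σ q then s q.1 else 0 := fun p q => by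
    simp [σ, Mmat, Prod.ext_iff]
  rw [mem_orthogonalGroup_iff']
  ext p q
  simp only [mul_apply, transpose_apply, hM, ite_mul, zero_mul, mul_ite, mul_zero, sum_ite_eq',
    mem_univ, if_true, σ.injective.eq_iff, one_apply, eq_comm (a := q)]
  split_ifs with hpq
  · rw [hpq]
    exact mul_self_eq_one_iff.2 (hs q.1)
  · rfl

section Randomization

variable {n m : ℕ} {M₁ M₂ M₃ : Matrix (Fin n × Fin m) (Fin n × Fin m) ℝ}
  (h₁ : M₁ ∈ orthogonalGroup _ ℝ) (h₂ : M₂ ∈ orthogonalGroup _ ℝ) (h₃ : M₃ ∈ orthogonalGroup _ ℝ)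
include h₁ h₂ h₃

lemma transpose_mul_mul_mul_mul_eq (A B : Matrix (Fin n × Fin m) (Fin n × Fin m) ℝ) :
    M₁ᵀ * (M₁ * A * M₂ᵀ * (M₂ * B * M₃ᵀ)) * M₃ = A * B := by
  rw [mem_orthogonalGroup_iff'] at h₁ h₂ h₃
  simp only [Matrix.mul_assoc]
  rw [h₃, Matrix.mul_one, ← Matrix.mul_assoc M₂ᵀ, h₂, Matrix.one_mul, ← Matrix.mul_assoc M₁ᵀ,
    h₁, Matrix.one_mul]

lemma transpose_mul_tensorBilin_mul_eq {R : ℕ} (c : ℝ) (U V W : Fin n → Fin n → Fin R → ℝ)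
    (A B : Matrix (Fin n × Fin m) (Fin n × Fin m) ℝ) :
    M₁ᵀ * tensorBilin (c • Ytens U V W - Xtens n) (M₁ * A * M₂ᵀ) (M₂ * B * M₃ᵀ) * M₃ =
      c • (M₁ᵀ * blinf U V W (M₁ * A * M₂ᵀ) (M₂ * B * M₃ᵀ) * M₃) - A * B := by
  rw [tensorBilin_smul_sub, tensorBilin_Xtens, ← blinf_eq_tensorBilin, Matrix.mul_sub,
    Matrix.sub_mul, transpose_mul_mul_mul_mul_eq h₁ h₂ h₃, Matrix.mul_smul, Matrix.smul_mul]

lemma frob_transpose_mul_tensorBilin_mul_le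
    (T : Fin n → Fin n → Fin n → Fin n → Fin n → Fin n → ℝ)
    (A B : Matrix (Fin n × Fin m) (Fin n × Fin m) ℝ) :
    frob (M₁ᵀ * tensorBilin T (M₁ * A * M₂ᵀ) (M₂ * B * M₃ᵀ) * M₃) ≤ frob6 T * frob A * frob B := by
  rw [frob_mul_orthogonal h₃, frob_orthogonal_mul (transpose_mem_orthogonalGroup h₁)]
  calc _ ≤ frob6 T * frob (M₁ * A * M₂ᵀ) * frob (M₂ * B * M₃ᵀ) := frob_tensorBilin_le _ _ _
    _ = frob6 T * frob A * frob B := by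
      rw [frob_mul_orthogonal (transpose_mem_orthogonalGroup h₂), frob_orthogonal_mul h₁,
        frob_mul_orthogonal (transpose_mem_orthogonalGroup h₃), frob_orthogonal_mul h₂]

end Randomization

theorem stmt1_general (n R m : ℕ)
    (U V W : Fin n → Fin n → Fin R → ℝ)
    (s₁ s₂ s₃ : Fin n → ℝ)
    (hs₁ : ∀ j, s₁ j = 1 ∨ s₁ j = -1) (hs₂ : ∀ j, s₂ j = 1 ∨ s₂ j = -1)
    (hs₃ : ∀ j, s₃ j = 1 ∨ s₃ j = -1)
    (π₁ π₂ π₃ : Equiv.Perm (Fin n))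
    (A B : Matrix (Fin n × Fin m) (Fin n × Fin m) ℝ) :
    frob (fhat m U V W s₁ s₂ s₃ π₁ π₂ π₃ A B - A * B) ≤
      frob A * frob B * frob6 ((1 - kappa U V W)⁻¹ • Ytens U V W - Xtens n) := by
  have h₁ := Mmat_mem_orthogonalGroup m π₁ hs₁
  have h₂ := Mmat_mem_orthogonalGroup m π₂ hs₂
  have h₃ := Mmat_mem_orthogonalGroup m π₃ hs₃
  rw [fhat, ← transpose_mul_tensorBilin_mul_eq h₁ h₂ h₃]
  exact (frob_transpose_mul_tensorBilin_mul_le h₁ h₂ h₃ _ A B).trans_eq (mul_rotate _ _ _)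

theorem stmt1 (n R m : ℕ) (hn : 0 < n) (hR : 0 < R) (hm : 1 ≤ m)
    (U V W : Fin n → Fin n → Fin R → ℝ) (hκ : kappa U V W ≠ 1)
    (s₁ s₂ s₃ : Fin n → ℝ)
    (hs₁ : ∀ j, s₁ j = 1 ∨ s₁ j = -1) (hs₂ : ∀ j, s₂ j = 1 ∨ s₂ j = -1)
    (hs₃ : ∀ j, s₃ j = 1 ∨ s₃ j = -1)
    (π₁ π₂ π₃ : Equiv.Perm (Fin n))
    (A B : Matrix (Fin n × Fin m) (Fin n × Fin m) ℝ) :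
    frob (fhat m U V W s₁ s₂ s₃ π₁ π₂ π₃ A B - A * B) ≤
      frob A * frob B * frob6 ((1 - kappa U V W)⁻¹ • Ytens U V W - Xtens n) :=
  stmt1_general n R m U V W s₁ s₂ s₃ hs₁ hs₂ hs₃ π₁ π₂ π₃ A B
end

section
/- Assume κ ≠ 1. For all A, B ∈ ℝ^{mn×mn}, the average of f̂(A,B) over all 2^{3n}·(n!)³ choices of sign functions s_1,s_2,s_3 : {1,…,n} → {−1,+1} and permutations π_1,π_2,π_3 of {1,…,n} (each combination given equal weight) equals the matrix product A·B. Equivalently, if the signs are i.i.d. Rademacher and the permutations are independent uniform, then E[f̂(A,B)] = A·B. -/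
open scoped BigOperators Matrix

/-- Sign function encoded by a Boolean vector: +1 for `true`, −1 for `false`. -/
def sgn {n : ℕ} (b : Fin n → Bool) : Fin n → ℝ := fun j => if b j then 1 else -1

lemma Mmat_mul_apply {n m : ℕ} (s : Fin n → ℝ) (π : Equiv.Perm (Fin n))
    (X : Matrix (Fin n × Fin m) (Fin n × Fin m) ℝ) (p q : Fin n × Fin m) :
    (Mmat m s π * X) p q = s (π.symm p.1) * X (π.symm p.1, p.2) q := by
  rw [Matrix.mul_apply, Finset.sum_eq_single ((π.symm p.1, p.2))]
  · simp [Mmat]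
  · rintro ⟨x1, x2⟩ _ hx
    rw [Mmat, if_neg, zero_mul]
    rintro ⟨h1, h2⟩
    exact hx (Prod.ext_iff.mpr ⟨by rw [h1]; simp, h2.symm⟩)
  · simp

lemma MmatT_mul_apply {n m : ℕ} (s : Fin n → ℝ) (π : Equiv.Perm (Fin n))
    (X : Matrix (Fin n × Fin m) (Fin n × Fin m) ℝ) (p q : Fin n × Fin m) :
    ((Mmat m s π)ᵀ * X) p q = s p.1 * X (π p.1, p.2) q := by
  rw [Matrix.mul_apply, Finset.sum_eq_single ((π p.1, p.2))]
  · simp [Mmat]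
  · rintro ⟨x1, x2⟩ _ hx
    rw [Matrix.transpose_apply, Mmat, if_neg, zero_mul]
    rintro ⟨h1, h2⟩
    exact hx (Prod.ext_iff.mpr ⟨h1, h2⟩)
  · simp

lemma mul_Mmat_apply {n m : ℕ} (s : Fin n → ℝ) (π : Equiv.Perm (Fin n))
    (X : Matrix (Fin n × Fin m) (Fin n × Fin m) ℝ) (p q : Fin n × Fin m) :
    (X * Mmat m s π) p q = s q.1 * X p (π q.1, q.2) := by
  rw [Matrix.mul_apply, Finset.sum_eq_single ((π q.1, q.2))]
  · rw [Mmat, if_pos ⟨rfl, rfl⟩, mul_comm]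
  · rintro ⟨x1, x2⟩ _ hx
    rw [Mmat, if_neg, mul_zero]
    rintro ⟨h1, h2⟩
    exact hx (Prod.ext_iff.mpr ⟨h1, h2⟩)
  · simp

lemma mul_MmatT_apply {n m : ℕ} (s : Fin n → ℝ) (π : Equiv.Perm (Fin n))
    (X : Matrix (Fin n × Fin m) (Fin n × Fin m) ℝ) (p q : Fin n × Fin m) :
    (X * (Mmat m s π)ᵀ) p q = s (π.symm q.1) * X p (π.symm q.1, q.2) := by
  rw [Matrix.mul_apply, Finset.sum_eq_single ((π.symm q.1, q.2))]
  · rw [Matrix.transpose_apply, Mmat, if_pos (by simp), mul_comm]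
  · rintro ⟨x1, x2⟩ _ hx
    rw [Matrix.transpose_apply, Mmat, if_neg, mul_zero]
    rintro ⟨h1, h2⟩
    exact hx (Prod.ext_iff.mpr ⟨by rw [h1]; simp, h2.symm⟩)
  · simp

lemma sum_sgn {n : ℕ} (a c : Fin n) :
    ∑ b : Fin n → Bool, sgn b a * sgn b c = if a = c then ((2:ℝ)^n) else 0 := by
  rcases eq_or_ne a c with h | h
  · subst h
    rw [if_pos rfl]
    have h1 : ∀ b : Fin n → Bool, sgn b a * sgn b a = 1 := by
      intro b; unfold sgn; split <;> norm_num
    simp only [h1, Finset.sum_const, Finset.card_univ, Fintype.card_fun, Fintype.card_bool,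
      Fintype.card_fin, nsmul_eq_mul, mul_one]
    push_cast; ring
  · rw [if_neg h]
    set flip : (Fin n → Bool) → (Fin n → Bool) := fun b => Function.update b a (!b a) with hf
    have hinv : Function.Involutive flip := by
      intro b; funext x
      rcases eq_or_ne x a with rfl | hx
      · simp [hf]
      · simp [hf, Function.update_apply, hx]
    have key : ∀ b, sgn (flip b) a * sgn (flip b) c = -(sgn b a * sgn b c) := by
      intro b
      have h1 : sgn (flip b) a = -(sgn b a) := by
        unfold sgn; simp [hf]; cases b a <;> simp
      have h2 : sgn (flip b) c = sgn b c := by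
        unfold sgn; simp [hf, Function.update_apply, (Ne.symm h)]
      rw [h1, h2]; ring
    have := Fintype.sum_bijective flip hinv.bijective
      (fun b => sgn (flip b) a * sgn (flip b) c) (fun b => sgn b a * sgn b c) (fun b => rfl)
    simp only [key] at this
    rw [Finset.sum_neg_distrib] at this
    linarith


lemma sum_perm_apply {n : ℕ} (a : Fin (n+1)) (g : Fin (n+1) → ℝ) :
    ∑ π : Equiv.Perm (Fin (n+1)), g (π a) = (Nat.factorial n : ℝ) * ∑ i, g i := by
  have h0 : ∑ π : Equiv.Perm (Fin (n+1)), g (π 0) = (Nat.factorial n : ℝ) * ∑ i, g i := by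
    rw [← Equiv.sum_comp (Equiv.Perm.decomposeFin.symm) (fun π => g (π 0))]
    rw [Fintype.sum_prod_type]
    simp only [Equiv.Perm.decomposeFin_symm_apply_zero]
    simp [Finset.sum_const, Finset.card_univ, Fintype.card_perm, Fintype.card_fin,
      mul_comm, Finset.sum_mul]
    rw [← Finset.sum_mul, mul_comm]
  rw [← h0]
  exact (Fintype.sum_equiv (Equiv.mulRight (Equiv.swap a 0))
    (fun π => g (π 0)) (fun π => g (π a)) (fun π => by simp)).symm

lemma comm5 {α β₁ β₂ β₃ β₄ β₅ : Type*} [Fintype α] [Fintype β₁] [Fintype β₂] [Fintype β₃]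
    [Fintype β₄] [Fintype β₅] (f : α → β₁ → β₂ → β₃ → β₄ → β₅ → ℝ) :
    ∑ a, ∑ b1, ∑ b2, ∑ b3, ∑ b4, ∑ b5, f a b1 b2 b3 b4 b5
      = ∑ b1, ∑ b2, ∑ b3, ∑ b4, ∑ b5, ∑ a, f a b1 b2 b3 b4 b5 := by
  rw [Finset.sum_comm]
  refine Finset.sum_congr rfl fun b1 _ => ?_
  rw [Finset.sum_comm]
  refine Finset.sum_congr rfl fun b2 _ => ?_
  rw [Finset.sum_comm]
  refine Finset.sum_congr rfl fun b3 _ => ?_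
  rw [Finset.sum_comm]
  refine Finset.sum_congr rfl fun b4 _ => ?_
  rw [Finset.sum_comm]

lemma prod_sum_mul {α β : Type*} [Fintype α] [Fintype β] (f : α → ℝ) (g : β → ℝ) :
    ∑ x : α × β, f x.1 * g x.2 = (∑ a, f a) * (∑ b, g b) := by
  rw [Finset.sum_mul_sum, Fintype.sum_prod_type]

lemma mul_split {α β : Type*} [Fintype α] [Fintype β] (f : α → ℝ) (g : β → ℝ) :
    ∑ x : α × β, g x.2 * f x.1 = (∑ b, g b) * (∑ a, f a) := by
  rw [Fintype.sum_prod_type]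
  simp only [← Finset.sum_mul]
  rw [← Finset.mul_sum]

lemma delta_sum {n : ℕ} (b : Fin n) (K : Fin n → ℝ) :
    ∑ g, (if g = b then (1:ℝ) else 0) * K g = K b := by
  simp [ite_mul]

lemma delta_sum2 {n : ℕ} (a : Fin n) (K : Fin n → ℝ) :
    ∑ c, (if a = c then (1:ℝ) else 0) * K c = K a := by
  simp [ite_mul]

lemma collapse {N M : ℕ} (a b : Fin N) (X : Fin N → Fin N → Fin N → Fin N → Fin M → ℝ) :
    ∑ z, ∑ e, ∑ g, ∑ c, ∑ d,
      (if a = c then (1:ℝ) else 0) *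
        ((if d = e then 1 else 0) * ((if g = b then 1 else 0) * X c d e g z))
    = ∑ z, ∑ e, X a e e b z := by
  refine Finset.sum_congr rfl fun z _ => ?_
  refine Finset.sum_congr rfl fun e _ => ?_
  have h1 : ∀ (g c : Fin N), (∑ d, (if a = c then (1:ℝ) else 0) *
      ((if d = e then 1 else 0) * ((if g = b then 1 else 0) * X c d e g z)))
      = (if a = c then (1:ℝ) else 0) * ((if g = b then 1 else 0) * X c e e g z) := by
    intro g c
    rw [← Finset.mul_sum, delta_sum e (fun d => (if g = b then (1:ℝ) else 0) * X c d e g z)]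
  simp only [h1]
  have h2 : ∀ g : Fin N, (∑ c, (if a = c then (1:ℝ) else 0) *
      ((if g = b then 1 else 0) * X c e e g z))
      = (if g = b then (1:ℝ) else 0) * X a e e g z :=
    fun g => delta_sum2 a (fun c => (if g = b then (1:ℝ) else 0) * X c e e g z)
  simp only [h2]
  exact delta_sum b (fun g => X a e e g z)

lemma sum_omega_eval {n R : ℕ} (U V W : Fin (n+1) → Fin (n+1) → Fin R → ℝ)
    (a b c d e g : Fin (n+1)) :
    (∑ ω : ((Fin (n+1) → Bool) × (Fin (n+1) → Bool) × (Fin (n+1) → Bool)) ×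
          (Equiv.Perm (Fin (n+1)) × Equiv.Perm (Fin (n+1)) × Equiv.Perm (Fin (n+1))),
      Ytens U V W (ω.2.1 c) (ω.2.2.1 d) (ω.2.2.1 e) (ω.2.2.2 g) (ω.2.1 a) (ω.2.2.2 b) *
        ((sgn ω.1.1 a * sgn ω.1.1 c) *
          ((sgn ω.1.2.1 d * sgn ω.1.2.1 e) * (sgn ω.1.2.2 g * sgn ω.1.2.2 b))))
    = (if a = c then (1:ℝ) else 0) * ((if d = e then 1 else 0) * ((if g = b then 1 else 0) *
        (((2:ℝ)^(n+1))^3 * ((Nat.factorial n : ℝ))^3 *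
          ∑ i, ∑ l, ∑ j, Ytens U V W i l l j i j))) := by
  rw [mul_split
    (fun σ : (Fin (n+1) → Bool) × (Fin (n+1) → Bool) × (Fin (n+1) → Bool) =>
      (sgn σ.1 a * sgn σ.1 c) *
        ((sgn σ.2.1 d * sgn σ.2.1 e) * (sgn σ.2.2 g * sgn σ.2.2 b)))
    (fun τ : Equiv.Perm (Fin (n+1)) × Equiv.Perm (Fin (n+1)) × Equiv.Perm (Fin (n+1)) =>
      Ytens U V W (τ.1 c) (τ.2.1 d) (τ.2.1 e) (τ.2.2 g) (τ.1 a) (τ.2.2 b))]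
  rw [prod_sum_mul (fun b₁ : Fin (n+1) → Bool => sgn b₁ a * sgn b₁ c)
    (fun σ2 : (Fin (n+1) → Bool) × (Fin (n+1) → Bool) =>
      (sgn σ2.1 d * sgn σ2.1 e) * (sgn σ2.2 g * sgn σ2.2 b))]
  rw [prod_sum_mul (fun b₂ : Fin (n+1) → Bool => sgn b₂ d * sgn b₂ e)
    (fun b₃ : Fin (n+1) → Bool => sgn b₃ g * sgn b₃ b)]
  rw [sum_sgn a c, sum_sgn d e, sum_sgn g b]
  rcases eq_or_ne a c with rfl | h₁
  · rcases eq_or_ne d e with rfl | h₂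
    · rcases eq_or_ne g b with rfl | h₃
      · simp only [if_pos rfl]
        have step : ∀ i, (∑ τ2 : Equiv.Perm (Fin (n+1)) × Equiv.Perm (Fin (n+1)),
            Ytens U V W i (τ2.1 d) (τ2.1 d) (τ2.2 g) i (τ2.2 g))
            = (Nat.factorial n : ℝ) * ∑ l, ((Nat.factorial n : ℝ) *
                ∑ j, Ytens U V W i l l j i j) := by
          intro i
          rw [Fintype.sum_prod_type]
          rw [sum_perm_apply d (fun l => ∑ π₃ : Equiv.Perm (Fin (n+1)),
            Ytens U V W i l l (π₃ g) i (π₃ g))]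
          congr 1
          refine Finset.sum_congr rfl fun l _ => ?_
          exact sum_perm_apply g (fun j => Ytens U V W i l l j i j)
        rw [Fintype.sum_prod_type]
        rw [sum_perm_apply a (fun i => ∑ τ2 : Equiv.Perm (Fin (n+1)) × Equiv.Perm (Fin (n+1)),
          Ytens U V W i (τ2.1 d) (τ2.1 d) (τ2.2 g) i (τ2.2 g))]
        simp only [step]
        simp only [Finset.mul_sum, Finset.sum_mul]
        refine Finset.sum_congr rfl fun i _ => ?_
        refine Finset.sum_congr rfl fun l _ => ?_
        refine Finset.sum_congr rfl fun j _ => ?_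
        simp only [if_true]
        ring
      · simp [if_neg h₃]
    · simp [if_neg h₂]
  · simp [if_neg h₁]


lemma fhat_apply {n R m : ℕ} (U V W : Fin n → Fin n → Fin R → ℝ)
    (s₁ s₂ s₃ : Fin n → ℝ) (π₁ π₂ π₃ : Equiv.Perm (Fin n))
    (A B : Matrix (Fin n × Fin m) (Fin n × Fin m) ℝ) (a b : Fin n) (t u : Fin m) :
    fhat m U V W s₁ s₂ s₃ π₁ π₂ π₃ A B (a, t) (b, u)
      = (1 - kappa U V W)⁻¹ *
        ∑ z, ∑ e, ∑ g, ∑ c, ∑ d,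
          (Ytens U V W (π₁ c) (π₂ d) (π₂ e) (π₃ g) (π₁ a) (π₃ b) *
            ((s₁ a * s₁ c) * ((s₂ d * s₂ e) * (s₃ g * s₃ b)))) *
          (A (c, t) (d, z) * B (e, z) (g, u)) := by
  have hA : ∀ p q : Fin n × Fin m, (Mmat m s₁ π₁ * A * (Mmat m s₂ π₂)ᵀ) p q
      = s₂ (π₂.symm q.1) * (s₁ (π₁.symm p.1) *
          A (π₁.symm p.1, p.2) (π₂.symm q.1, q.2)) := by
    intro p q; rw [mul_MmatT_apply, Mmat_mul_apply]
  have hB : ∀ p q : Fin n × Fin m, (Mmat m s₂ π₂ * B * (Mmat m s₃ π₃)ᵀ) p q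
      = s₃ (π₃.symm q.1) * (s₂ (π₂.symm p.1) *
          B (π₂.symm p.1, p.2) (π₃.symm q.1, q.2)) := by
    intro p q; rw [mul_MmatT_apply, Mmat_mul_apply]
  unfold fhat
  rw [Matrix.smul_apply, smul_eq_mul]
  congr 1
  rw [mul_Mmat_apply, MmatT_mul_apply]
  have hbl : blinf U V W (Mmat m s₁ π₁ * A * (Mmat m s₂ π₂)ᵀ)
      (Mmat m s₂ π₂ * B * (Mmat m s₃ π₃)ᵀ) (π₁ a, t) (π₃ b, u)
      = ∑ r, W (π₁ a) (π₃ b) r *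
          ∑ z, (∑ k, ∑ l, U k l r * (s₂ (π₂.symm l) * (s₁ (π₁.symm k) *
                  A (π₁.symm k, t) (π₂.symm l, z)))) *
               (∑ k', ∑ l', V k' l' r * (s₃ (π₃.symm l') * (s₂ (π₂.symm k') *
                  B (π₂.symm k', z) (π₃.symm l', u)))) := by
    simp only [blinf, hA, hB]
  rw [hbl]
  have lhs_eq : s₃ b * (s₁ a * ∑ r, W (π₁ a) (π₃ b) r *
          ∑ z, (∑ k, ∑ l, U k l r * (s₂ (π₂.symm l) * (s₁ (π₁.symm k) *
                  A (π₁.symm k, t) (π₂.symm l, z)))) *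
               (∑ k', ∑ l', V k' l' r * (s₃ (π₃.symm l') * (s₂ (π₂.symm k') *
                  B (π₂.symm k', z) (π₃.symm l', u)))))
      = ∑ r, ∑ z, ∑ e, ∑ g, ∑ c, ∑ d,
          (U c d r * V e g r * W (π₁ a) (π₃ b) r *
            ((s₁ a * s₁ (π₁.symm c)) * ((s₂ (π₂.symm d) * s₂ (π₂.symm e)) *
              (s₃ (π₃.symm g) * s₃ b)))) *
          (A (π₁.symm c, t) (π₂.symm d, z) * B (π₂.symm e, z) (π₃.symm g, u)) := by
    simp only [Finset.mul_sum, Finset.sum_mul]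
    refine Finset.sum_congr rfl fun r _ => ?_
    refine Finset.sum_congr rfl fun z _ => ?_
    refine Finset.sum_congr rfl fun e _ => ?_
    refine Finset.sum_congr rfl fun g _ => ?_
    refine Finset.sum_congr rfl fun c _ => ?_
    refine Finset.sum_congr rfl fun d _ => ?_
    ring
  have rhs_eq : (∑ z, ∑ e, ∑ g, ∑ c, ∑ d,
          (Ytens U V W (π₁ c) (π₂ d) (π₂ e) (π₃ g) (π₁ a) (π₃ b) *
            ((s₁ a * s₁ c) * ((s₂ d * s₂ e) * (s₃ g * s₃ b)))) *
          (A (c, t) (d, z) * B (e, z) (g, u)))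
      = ∑ z, ∑ e, ∑ g, ∑ c, ∑ d, ∑ r,
          (U c d r * V e g r * W (π₁ a) (π₃ b) r *
            ((s₁ a * s₁ (π₁.symm c)) * ((s₂ (π₂.symm d) * s₂ (π₂.symm e)) *
              (s₃ (π₃.symm g) * s₃ b)))) *
          (A (π₁.symm c, t) (π₂.symm d, z) * B (π₂.symm e, z) (π₃.symm g, u)) := by
    refine Finset.sum_congr rfl fun z _ => ?_
    rw [show (∑ e, ∑ g, ∑ c, ∑ d,
          (Ytens U V W (π₁ c) (π₂ d) (π₂ e) (π₃ g) (π₁ a) (π₃ b) *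
            ((s₁ a * s₁ c) * ((s₂ d * s₂ e) * (s₃ g * s₃ b)))) *
          (A (c, t) (d, z) * B (e, z) (g, u)))
        = ∑ e, ∑ g, ∑ c, ∑ d,
          (Ytens U V W (π₁ (π₁.symm c)) (π₂ (π₂.symm d)) (π₂ (π₂.symm e)) (π₃ (π₃.symm g))
              (π₁ a) (π₃ b) *
            ((s₁ a * s₁ (π₁.symm c)) * ((s₂ (π₂.symm d) * s₂ (π₂.symm e)) *
              (s₃ (π₃.symm g) * s₃ b)))) *
          (A (π₁.symm c, t) (π₂.symm d, z) * B (π₂.symm e, z) (π₃.symm g, u))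
      from by
        rw [← Equiv.sum_comp π₂.symm
          (fun e => ∑ g, ∑ c, ∑ d, (Ytens U V W (π₁ c) (π₂ d) (π₂ e) (π₃ g) (π₁ a) (π₃ b) *
            ((s₁ a * s₁ c) * ((s₂ d * s₂ e) * (s₃ g * s₃ b)))) *
            (A (c, t) (d, z) * B (e, z) (g, u)))]
        refine Finset.sum_congr rfl fun e _ => ?_
        rw [← Equiv.sum_comp π₃.symm
          (fun g => ∑ c, ∑ d, (Ytens U V W (π₁ c) (π₂ d) (π₂ (π₂.symm e)) (π₃ g) (π₁ a) (π₃ b) *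
            ((s₁ a * s₁ c) * ((s₂ d * s₂ (π₂.symm e)) * (s₃ g * s₃ b)))) *
            (A (c, t) (d, z) * B (π₂.symm e, z) (g, u)))]
        refine Finset.sum_congr rfl fun g _ => ?_
        rw [← Equiv.sum_comp π₁.symm
          (fun c => ∑ d, (Ytens U V W (π₁ c) (π₂ d) (π₂ (π₂.symm e)) (π₃ (π₃.symm g)) (π₁ a) (π₃ b) *
            ((s₁ a * s₁ c) * ((s₂ d * s₂ (π₂.symm e)) * (s₃ (π₃.symm g) * s₃ b)))) *
            (A (c, t) (d, z) * B (π₂.symm e, z) (π₃.symm g, u)))]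
        refine Finset.sum_congr rfl fun c _ => ?_
        rw [← Equiv.sum_comp π₂.symm
          (fun d => (Ytens U V W (π₁ (π₁.symm c)) (π₂ d) (π₂ (π₂.symm e)) (π₃ (π₃.symm g)) (π₁ a) (π₃ b) *
            ((s₁ a * s₁ (π₁.symm c)) * ((s₂ d * s₂ (π₂.symm e)) * (s₃ (π₃.symm g) * s₃ b)))) *
            (A (π₁.symm c, t) (d, z) * B (π₂.symm e, z) (π₃.symm g, u)))]]
    simp only [Equiv.apply_symm_apply, Ytens]
    refine Finset.sum_congr rfl fun e _ => ?_
    refine Finset.sum_congr rfl fun g _ => ?_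
    refine Finset.sum_congr rfl fun c _ => ?_
    refine Finset.sum_congr rfl fun d _ => ?_
    rw [Finset.sum_mul, Finset.sum_mul]
  rw [lhs_eq, comm5, rhs_eq]


lemma T_eq {n R : ℕ} (hn : 0 < n) (U V W : Fin n → Fin n → Fin R → ℝ) :
    (∑ i, ∑ l, ∑ j, Ytens U V W i l l j i j) = (n:ℝ)^3 * (1 - kappa U V W) := by
  have hswap : (∑ i, ∑ l, ∑ j, Ytens U V W i l l j i j)
      = ∑ i, ∑ j, ∑ l, (∑ r, U i l r * V l j r * W i j r) :=
    Finset.sum_congr rfl fun i _ => Finset.sum_comm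
  rw [hswap]
  unfold kappa
  have hcard : (∑ _i : Fin n, ∑ _j : Fin n, ∑ _l : Fin n, (1:ℝ)) = (n:ℝ)^3 := by
    simp; ring
  have hsub : (∑ i, ∑ j, ∑ l, ((1:ℝ) - ∑ r, U i l r * V l j r * W i j r))
      = (n:ℝ)^3 - ∑ i, ∑ j, ∑ l, (∑ r, U i l r * V l j r * W i j r) := by
    simp only [Finset.sum_sub_distrib]
    rw [hcard]
  rw [hsub]
  have hne : ((n:ℝ)^3) ≠ 0 := by
    have : (n:ℝ) ≠ 0 := Nat.cast_ne_zero.mpr hn.ne'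
    positivity
  field_simp
  ring


theorem stmt6 (n R m : ℕ) (hn : 0 < n) (hR : 0 < R) (hm : 1 ≤ m)
    (U V W : Fin n → Fin n → Fin R → ℝ) (hκ : kappa U V W ≠ 1)
    (A B : Matrix (Fin n × Fin m) (Fin n × Fin m) ℝ) :
    ((2 ^ (3 * n) * Nat.factorial n ^ 3 : ℕ) : ℝ)⁻¹ •
      ∑ ω : ((Fin n → Bool) × (Fin n → Bool) × (Fin n → Bool)) ×
            (Equiv.Perm (Fin n) × Equiv.Perm (Fin n) × Equiv.Perm (Fin n)),
        fhat m U V W (sgn ω.1.1) (sgn ω.1.2.1) (sgn ω.1.2.2) ω.2.1 ω.2.2.1 ω.2.2.2 A B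
      = A * B := by
  obtain ⟨n', rfl⟩ : ∃ n', n = n' + 1 := ⟨n - 1, by omega⟩
  have hκ0 : (1 - kappa U V W) ≠ 0 := sub_ne_zero.mpr (Ne.symm hκ)
  set κ := kappa U V W with hκdef
  ext ⟨a, t⟩ ⟨b, u⟩
  rw [Matrix.smul_apply, smul_eq_mul, Matrix.sum_apply]
  simp only [fhat_apply]
  rw [← Finset.mul_sum]
  set Cval : ℝ := ((2:ℝ)^(n'+1))^3 * ((Nat.factorial n' : ℝ))^3 *
      ∑ i, ∑ l, ∑ j, Ytens U V W i l l j i j with hCval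
  have hmid : (∑ ω : ((Fin (n'+1) → Bool) × (Fin (n'+1) → Bool) × (Fin (n'+1) → Bool)) ×
          (Equiv.Perm (Fin (n'+1)) × Equiv.Perm (Fin (n'+1)) × Equiv.Perm (Fin (n'+1))),
        ∑ z, ∑ e, ∑ g, ∑ c, ∑ d,
          (Ytens U V W (ω.2.1 c) (ω.2.2.1 d) (ω.2.2.1 e) (ω.2.2.2 g) (ω.2.1 a) (ω.2.2.2 b) *
            ((sgn ω.1.1 a * sgn ω.1.1 c) *
              ((sgn ω.1.2.1 d * sgn ω.1.2.1 e) * (sgn ω.1.2.2 g * sgn ω.1.2.2 b)))) *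
          (A (c, t) (d, z) * B (e, z) (g, u)))
      = ∑ z, ∑ e, Cval * (A (a, t) (e, z) * B (e, z) (b, u)) := by
    rw [comm5]
    have hin : ∀ (z : Fin m) (e g c d : Fin (n'+1)),
        (∑ ω : ((Fin (n'+1) → Bool) × (Fin (n'+1) → Bool) × (Fin (n'+1) → Bool)) ×
          (Equiv.Perm (Fin (n'+1)) × Equiv.Perm (Fin (n'+1)) × Equiv.Perm (Fin (n'+1))),
          (Ytens U V W (ω.2.1 c) (ω.2.2.1 d) (ω.2.2.1 e) (ω.2.2.2 g) (ω.2.1 a) (ω.2.2.2 b) *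
            ((sgn ω.1.1 a * sgn ω.1.1 c) *
              ((sgn ω.1.2.1 d * sgn ω.1.2.1 e) * (sgn ω.1.2.2 g * sgn ω.1.2.2 b)))) *
          (A (c, t) (d, z) * B (e, z) (g, u)))
        = (if a = c then (1:ℝ) else 0) *
            ((if d = e then 1 else 0) * ((if g = b then 1 else 0) *
              (Cval * (A (c, t) (d, z) * B (e, z) (g, u))))) := by
      intro z e g c d
      rw [← Finset.sum_mul, sum_omega_eval U V W a b c d e g]
      ring
    simp only [hin]
    exact collapse a b (fun c d e g z => Cval * (A (c, t) (d, z) * B (e, z) (g, u)))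
  rw [hmid]
  rw [show (∑ z, ∑ e, Cval * (A (a, t) (e, z) * B (e, z) (b, u)))
      = Cval * ∑ z : Fin m, ∑ e : Fin (n'+1), A (a, t) (e, z) * B (e, z) (b, u) from by
    rw [Finset.mul_sum]
    exact Finset.sum_congr rfl fun z _ => by rw [Finset.mul_sum]]
  rw [Matrix.mul_apply, Fintype.sum_prod_type]
  rw [Finset.sum_comm]
  rw [hCval, T_eq (Nat.succ_pos n') U V W]
  have hfac : ((Nat.factorial (n'+1) : ℕ) : ℝ) = ((n' : ℝ) + 1) * (Nat.factorial n' : ℝ) := by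
    rw [Nat.factorial_succ]; push_cast; ring
  have h2 : ((2:ℝ) ^ (3 * (n'+1))) = ((2:ℝ)^(n'+1))^3 := by
    rw [mul_comm 3 (n'+1), pow_mul]
  have hfne : (Nat.factorial n' : ℝ) ≠ 0 := Nat.cast_ne_zero.mpr (Nat.factorial_ne_zero n')
  have hcoef : ((2 ^ (3 * (n'+1)) * Nat.factorial (n'+1) ^ 3 : ℕ) : ℝ)⁻¹ *
      ((1 - κ)⁻¹ * (((2:ℝ)^(n'+1))^3 * ((Nat.factorial n' : ℝ))^3 *
        (((n'+1 : ℕ):ℝ)^3 * (1 - κ)))) = 1 := by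
    rw [show Nat.factorial (n'+1) = (n'+1) * Nat.factorial n' from Nat.factorial_succ n']
    push_cast
    rw [h2]
    rw [hκdef] at hκ0 ⊢
    field_simp
  calc ((2 ^ (3 * (n'+1)) * Nat.factorial (n'+1) ^ 3 : ℕ) : ℝ)⁻¹ *
      ((1 - κ)⁻¹ * (((2:ℝ)^(n'+1))^3 * ((Nat.factorial n' : ℝ))^3 *
        (((n'+1 : ℕ):ℝ)^3 * (1 - κ)) *
        ∑ y : Fin (n'+1), ∑ x : Fin m, A (a, t) (y, x) * B (y, x) (b, u)))
      = (((2 ^ (3 * (n'+1)) * Nat.factorial (n'+1) ^ 3 : ℕ) : ℝ)⁻¹ *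
          ((1 - κ)⁻¹ * (((2:ℝ)^(n'+1))^3 * ((Nat.factorial n' : ℝ))^3 *
            (((n'+1 : ℕ):ℝ)^3 * (1 - κ))))) *
        ∑ y : Fin (n'+1), ∑ x : Fin m, A (a, t) (y, x) * B (y, x) (b, u) := by ring
    _ = ∑ y : Fin (n'+1), ∑ x : Fin m, A (a, t) (y, x) * B (y, x) (b, u) := by
        rw [hcoef, one_mul]
end

section
/- If the tensors U, V, W satisfy the exactness condition Σ_{r=1}^R u_{klr} v_{k'l'r} w_{ijr} = δ_{ki} δ_{l'j} δ_{lk'} for all (k,l,k',l',i,j) ∈ {1,…,n}^6, then κ = 0 and, for every choice of sign functions s_1,s_2,s_3 and permutations π_1,π_2,π_3 and all A, B ∈ ℝ^{mn×mn}, the randomized computation is exact: f̂(A,B) = A·B. -/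
open scoped BigOperators Matrix

/-! Exactness says that the tensor `Σ_r u_{klr} v_{k'l'r} w_{ijr}` of `f` is the
matrix-multiplication tensor, so `f` computes `A * B` block by block, and the entries
entering `κ` are all `1`, so `κ = 0`. Each `Mᵢ` is a signed block permutation, hence
orthogonal, and the conjugations in `f̂` cancel. -/

open Finset

lemma Matrix.transpose_mul_conj_mul_conj_mul {ι α : Type*} [Fintype ι] [DecidableEq ι]
    [Semiring α] {M₁ M₂ M₃ : Matrix ι ι α} (h₁ : M₁ᵀ * M₁ = 1) (h₂ : M₂ᵀ * M₂ = 1)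
    (h₃ : M₃ᵀ * M₃ = 1) (A B : Matrix ι ι α) :
    M₁ᵀ * ((M₁ * A * M₂ᵀ) * (M₂ * B * M₃ᵀ)) * M₃ = A * B := by
  simp only [Matrix.mul_assoc, h₃, Matrix.mul_one]
  rw [← Matrix.mul_assoc M₂ᵀ, h₂, Matrix.one_mul, ← Matrix.mul_assoc M₁ᵀ, h₁, Matrix.one_mul]

section Mmat

variable {n : ℕ} (m : ℕ) (s : Fin n → ℝ) (π : Equiv.Perm (Fin n))

lemma Mmat_apply_eq_ite (x q : Fin n × Fin m) :
    Mmat m s π x q = if x = (π q.1, q.2) then s q.1 else 0 := by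
  simp only [Mmat, Prod.ext_iff]

lemma Mmat_transpose_mul_self (hs : ∀ j, s j * s j = 1) : (Mmat m s π)ᵀ * Mmat m s π = 1 := by
  ext p q
  have hperm : ((π p.1, p.2) : Fin n × Fin m) = (π q.1, q.2) ↔ p = q := by
    simp only [Prod.ext_iff, π.injective.eq_iff]
  simp only [Matrix.mul_apply, Matrix.transpose_apply, Mmat_apply_eq_ite, ite_mul, zero_mul,
    sum_ite_eq', mem_univ, if_true, hperm, Matrix.one_apply]
  split_ifs with hpq
  · rw [hpq, hs]
  · exact mul_zero _

end Mmat

section Bilinear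

variable {n R m : ℕ} (U V W : Fin n → Fin n → Fin R → ℝ)

lemma blinf_apply_eq_sum_Ytens (A B : Matrix (Fin n × Fin m) (Fin n × Fin m) ℝ)
    (i j : Fin n) (a b : Fin m) :
    blinf U V W A B (i, a) (j, b) =
      ∑ z, ∑ k, ∑ l, ∑ k', ∑ l', Ytens U V W k l k' l' i j * (A (k, a) (l, z) * B (k', z) (l', b)) := by
  simp only [blinf, Ytens, mul_sum, sum_mul]
  simp_rw [sum_comm (s := (univ : Finset (Fin R)))]
  refine sum_congr rfl fun z _ => ?_
  rw [sum_comm_cycle]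
  refine sum_congr rfl fun k _ => ?_
  rw [sum_comm_cycle]
  refine sum_congr rfl fun l _ => sum_congr rfl fun k' _ => sum_congr rfl fun l' _ =>
    sum_congr rfl fun r _ => by ring

lemma blinf_eq_mul_of_Ytens_eq_Xtens (hexact : Ytens U V W = Xtens n)
    (A B : Matrix (Fin n × Fin m) (Fin n × Fin m) ℝ) : blinf U V W A B = A * B := by
  ext ⟨i, a⟩ ⟨j, b⟩
  rw [blinf_apply_eq_sum_Ytens, hexact, Matrix.mul_apply, Fintype.sum_prod_type_right]
  simp [Xtens, ite_mul, mul_ite, sum_ite_eq, sum_ite_eq']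

lemma kappa_eq_zero_of_Ytens_eq_Xtens (hexact : Ytens U V W = Xtens n) : kappa U V W = 0 := by
  have hdiag : ∀ i j l, ∑ r, U i l r * V l j r * W i j r = 1 := fun i j l => by
    simpa [Ytens, Xtens] using congr($hexact i l l j i j)
  simp [kappa, hdiag]

end Bilinear

theorem stmt12_general (n R m : ℕ)
    (U V W : Fin n → Fin n → Fin R → ℝ)
    (hexact : ∀ k l k' l' i j : Fin n,
      (∑ r, U k l r * V k' l' r * W i j r) =
        (if k = i then (1 : ℝ) else 0) * (if l' = j then (1 : ℝ) else 0) *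
          (if l = k' then (1 : ℝ) else 0)) :
    kappa U V W = 0 ∧
    ∀ (s₁ s₂ s₃ : Fin n → ℝ),
      (∀ j, s₁ j = 1 ∨ s₁ j = -1) → (∀ j, s₂ j = 1 ∨ s₂ j = -1) →
      (∀ j, s₃ j = 1 ∨ s₃ j = -1) →
      ∀ (π₁ π₂ π₃ : Equiv.Perm (Fin n))
        (A B : Matrix (Fin n × Fin m) (Fin n × Fin m) ℝ),
        fhat m U V W s₁ s₂ s₃ π₁ π₂ π₃ A B = A * B := by
  have hY : Ytens U V W = Xtens n := by
    funext k l k' l' i j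
    exact hexact k l k' l' i j
  have hκ := kappa_eq_zero_of_Ytens_eq_Xtens U V W hY
  refine ⟨hκ, fun s₁ s₂ s₃ hs₁ hs₂ hs₃ π₁ π₂ π₃ A B => ?_⟩
  have orthogonal (s : Fin n → ℝ) (hs : ∀ j, s j = 1 ∨ s j = -1) (π : Equiv.Perm (Fin n)) :
      (Mmat m s π)ᵀ * Mmat m s π = 1 :=
    Mmat_transpose_mul_self m s π fun j => mul_self_eq_one_iff.mpr (hs j)
  rw [fhat, hκ, sub_zero, inv_one, one_smul, blinf_eq_mul_of_Ytens_eq_Xtens U V W hY]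
  exact Matrix.transpose_mul_conj_mul_conj_mul (orthogonal s₁ hs₁ π₁) (orthogonal s₂ hs₂ π₂)
    (orthogonal s₃ hs₃ π₃) A B

theorem stmt12 (n R m : ℕ) (hn : 0 < n) (hR : 0 < R) (hm : 1 ≤ m)
    (U V W : Fin n → Fin n → Fin R → ℝ)
    (hexact : ∀ k l k' l' i j : Fin n,
      (∑ r, U k l r * V k' l' r * W i j r) =
        (if k = i then (1 : ℝ) else 0) * (if l' = j then (1 : ℝ) else 0) *
          (if l = k' then (1 : ℝ) else 0)) :
    kappa U V W = 0 ∧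
    ∀ (s₁ s₂ s₃ : Fin n → ℝ),
      (∀ j, s₁ j = 1 ∨ s₁ j = -1) → (∀ j, s₂ j = 1 ∨ s₂ j = -1) →
      (∀ j, s₃ j = 1 ∨ s₃ j = -1) →
      ∀ (π₁ π₂ π₃ : Equiv.Perm (Fin n))
        (A B : Matrix (Fin n × Fin m) (Fin n × Fin m) ℝ),
        fhat m U V W s₁ s₂ s₃ π₁ π₂ π₃ A B = A * B :=
  stmt12_general n R m U V W hexact
end

section
/- For all A, B ∈ ℝ^{mn×mn}, the output of the bilinear computation satisfies ‖f(A,B)‖ ≤ ‖A‖ · ‖B‖ · ‖Y‖, where ‖·‖ denotes the Frobenius norm. -/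
open scoped BigOperators Matrix

/-!
Block `(i, j)` of `f(A, B)` is `∑ y_{k l k' l' i j} A_{kl} B_{k'l'}`. Read entrywise, this says that
`f(A, B)`, with its indices regrouped as `((i, j), (a, b))`, is the matrix product `Yᵀ C` of the
flattening of `Y` (rows `(k, l, k', l')`, columns `(i, j)`) and the matrix `C` whose row
`(k, l, k', l')` is the flattened block product `A_{kl} B_{k'l'}`. Submultiplicativity of the
Frobenius norm, applied once to `Yᵀ C` and once to each `A_{kl} B_{k'l'}`, gives
`‖f(A, B)‖ ≤ ‖Y‖ ‖C‖` and `‖C‖² ≤ ∑ ‖A_{kl}‖² ‖B_{k'l'}‖² = ‖A‖² ‖B‖²`.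
-/

open Finset

section FrobeniusSq

variable {ι κ μ : Type*} [Fintype ι] [Fintype κ] [Fintype μ]

def frobSq (A : Matrix ι κ ℝ) : ℝ := ∑ i, ∑ j, A i j ^ 2

lemma frob_eq_sqrt_frobSq (A : Matrix ι κ ℝ) : frob A = √(frobSq A) := rfl

lemma frobSq_nonneg (A : Matrix ι κ ℝ) : 0 ≤ frobSq A := by
  unfold frobSq; positivity

lemma frobSq_transpose (A : Matrix ι κ ℝ) : frobSq Aᵀ = frobSq A := sum_comm

lemma frobSq_mul_le (X : Matrix ι κ ℝ) (Y : Matrix κ μ ℝ) :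
    frobSq (X * Y) ≤ frobSq X * frobSq Y := by
  calc frobSq (X * Y) = ∑ i, ∑ j, (∑ k, X i k * Y k j) ^ 2 := rfl
    _ ≤ ∑ i, ∑ j, (∑ k, X i k ^ 2) * ∑ k, Yᵀ j k ^ 2 := by
      gcongr with i _ j _
      exact sum_mul_sq_le_sq_mul_sq _ _ _
    _ = frobSq X * frobSq Y := by
      rw [← frobSq_transpose Y, frobSq, frobSq, sum_mul_sum]

lemma frobSq_prod_prod {ι' κ' : Type*} [Fintype ι'] [Fintype κ']
    (A : Matrix (ι × ι') (κ × κ') ℝ) :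
    frobSq A = frobSq (fun (x : ι × κ) (y : ι' × κ') => A (x.1, y.1) (x.2, y.2)) := by
  simp only [frobSq, Fintype.sum_prod_type]
  exact sum_congr rfl fun _ _ => sum_comm

end FrobeniusSq

section Blocks

variable {I J I' J' K L N : Type*} [Fintype I] [Fintype J] [Fintype I'] [Fintype J']
  [Fintype K] [Fintype L] [Fintype N]

def blockProducts (A : Matrix (I × K) (J × L) ℝ) (B : Matrix (I' × L) (J' × N) ℝ) :
    Matrix ((I × J) × (I' × J')) (K × N) ℝ :=
  fun t ab => ((Matrix.comp I J K L ℝ).symm A t.1.1 t.1.2 *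
    (Matrix.comp I' J' L N ℝ).symm B t.2.1 t.2.2) ab.1 ab.2

lemma frobSq_eq_sum_frobSq_comp_symm (A : Matrix (I × K) (J × L) ℝ) :
    frobSq A = ∑ x : I × J, frobSq ((Matrix.comp I J K L ℝ).symm A x.1 x.2) := by
  rw [frobSq_prod_prod]
  simp only [frobSq, Fintype.sum_prod_type]
  rfl

lemma frobSq_blockProducts_le (A : Matrix (I × K) (J × L) ℝ)
    (B : Matrix (I' × L) (J' × N) ℝ) :
    frobSq (blockProducts A B) ≤ frobSq A * frobSq B := by
  calc frobSq (blockProducts A B)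
      = ∑ t : (I × J) × (I' × J'), frobSq ((Matrix.comp I J K L ℝ).symm A t.1.1 t.1.2 *
          (Matrix.comp I' J' L N ℝ).symm B t.2.1 t.2.2) := by
        simp only [frobSq, blockProducts, Fintype.sum_prod_type]
    _ ≤ ∑ t : (I × J) × (I' × J'), frobSq ((Matrix.comp I J K L ℝ).symm A t.1.1 t.1.2) *
          frobSq ((Matrix.comp I' J' L N ℝ).symm B t.2.1 t.2.2) :=
        sum_le_sum fun _ _ => frobSq_mul_le _ _
    _ = frobSq A * frobSq B := by
      rw [frobSq_eq_sum_frobSq_comp_symm A, frobSq_eq_sum_frobSq_comp_symm B, sum_mul_sum,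
        Fintype.sum_prod_type]

end Blocks

def flatten6 {n : ℕ} (T : Fin n → Fin n → Fin n → Fin n → Fin n → Fin n → ℝ) :
    Matrix ((Fin n × Fin n) × (Fin n × Fin n)) (Fin n × Fin n) ℝ :=
  fun t ij => T t.1.1 t.1.2 t.2.1 t.2.2 ij.1 ij.2

lemma frob6_eq_sqrt_frobSq_flatten6 {n : ℕ}
    (T : Fin n → Fin n → Fin n → Fin n → Fin n → Fin n → ℝ) :
    frob6 T = √(frobSq (flatten6 T)) := by
  simp only [frob6, frobSq, flatten6, Fintype.sum_prod_type]

lemma blinf_apply_eq_mul {n R m : ℕ} (U V W : Fin n → Fin n → Fin R → ℝ)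
    (A B : Matrix (Fin n × Fin m) (Fin n × Fin m) ℝ) (i j : Fin n) (a b : Fin m) :
    blinf U V W A B (i, a) (j, b) =
      ((flatten6 (Ytens U V W))ᵀ * blockProducts A B) (i, j) (a, b) := by
  have expand : ∀ r z, (∑ k, ∑ l, U k l r * A (k, a) (l, z)) *
      (∑ k', ∑ l', V k' l' r * B (k', z) (l', b)) =
      ∑ t : (Fin n × Fin n) × (Fin n × Fin n), U t.1.1 t.1.2 r * A (t.1.1, a) (t.1.2, z) *
        (V t.2.1 t.2.2 r * B (t.2.1, z) (t.2.2, b)) := by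
    intro r z
    rw [← Fintype.sum_prod_type', ← Fintype.sum_prod_type', sum_mul_sum,
      ← Fintype.sum_prod_type']
  simp only [blinf, expand, Ytens, flatten6, blockProducts, Matrix.mul_apply,
    Matrix.transpose_apply, Matrix.comp_symm_apply, sum_mul, mul_sum]
  rw [sum_comm]
  conv_rhs => rw [sum_comm]
  refine sum_congr rfl fun z _ => ?_
  rw [sum_comm]
  exact sum_congr rfl fun _ _ => sum_congr rfl fun _ _ => by ring

lemma frobSq_blinf_le {n R m : ℕ} (U V W : Fin n → Fin n → Fin R → ℝ)
    (A B : Matrix (Fin n × Fin m) (Fin n × Fin m) ℝ) :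
    frobSq (blinf U V W A B) ≤ frobSq A * frobSq B * frobSq (flatten6 (Ytens U V W)) := by
  set Y := flatten6 (Ytens U V W)
  calc frobSq (blinf U V W A B) = frobSq (Yᵀ * blockProducts A B) := by
        rw [frobSq_prod_prod]
        congr
        ext ⟨i, j⟩ ⟨a, b⟩
        exact blinf_apply_eq_mul U V W A B i j a b
    _ ≤ frobSq Y * frobSq (blockProducts A B) := by
        simpa only [frobSq_transpose] using frobSq_mul_le Yᵀ (blockProducts A B)
    _ ≤ frobSq Y * (frobSq A * frobSq B) := by
        gcongr
        exacts [frobSq_nonneg Y, frobSq_blockProducts_le A B]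
    _ = frobSq A * frobSq B * frobSq Y := by ring

theorem stmt13_general (n R m : ℕ)
    (U V W : Fin n → Fin n → Fin R → ℝ)
    (A B : Matrix (Fin n × Fin m) (Fin n × Fin m) ℝ) :
    frob (blinf U V W A B) ≤ frob A * frob B * frob6 (Ytens U V W) := by
  rw [frob_eq_sqrt_frobSq, frob_eq_sqrt_frobSq, frob_eq_sqrt_frobSq,
    frob6_eq_sqrt_frobSq_flatten6, ← Real.sqrt_mul (frobSq_nonneg A),
    ← Real.sqrt_mul (mul_nonneg (frobSq_nonneg A) (frobSq_nonneg B))]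
  exact Real.sqrt_le_sqrt (frobSq_blinf_le U V W A B)

theorem stmt13 (n R m : ℕ) (hn : 0 < n) (hR : 0 < R) (hm : 1 ≤ m)
    (U V W : Fin n → Fin n → Fin R → ℝ)
    (A B : Matrix (Fin n × Fin m) (Fin n × Fin m) ℝ) :
    frob (blinf U V W A B) ≤ frob A * frob B * frob6 (Ytens U V W) :=
  stmt13_general n R m U V W A B
end

section
/- Assume κ ≠ 1 and let Q ≥ 1 be an integer. For all A, B ∈ ℝ^{m n^Q × m n^Q}, the expectation of the Q-level recursive randomized bilinear computation satisfies E[F̂^{(Q)}(A,B)] = A·B, where the expectation is over all the i.i.d. Rademacher sign variables and independent uniform random permutations used at the Q levels of recursion. -/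
open scoped BigOperators Matrix

/-- Index type for a matrix of size m·nᵠ: Q levels of n×n blocks over a base of size m. -/
def BIdx (m n : ℕ) : ℕ → Type
  | 0 => Fin m
  | (Q + 1) => Fin n × BIdx m n Q

instance BIdx.fintype (m n : ℕ) : (Q : ℕ) → Fintype (BIdx m n Q)
  | 0 => inferInstanceAs (Fintype (Fin m))
  | (Q + 1) => letI := BIdx.fintype m n Q
               inferInstanceAs (Fintype (Fin n × BIdx m n Q))

/-- One level of the recursive randomized bilinear computation: given the recursive
routine `g` for the inner products, produce the routine for matrices one block-level up. -/
noncomputable def stepR {n R : ℕ} {ι : Type} (U V W : Fin n → Fin n → Fin R → ℝ) (κ : ℝ)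
    (s₁ s₂ s₃ : Fin n → ℝ) (π₁ π₂ π₃ : Equiv.Perm (Fin n))
    (g : Matrix ι ι ℝ → Matrix ι ι ℝ → Matrix ι ι ℝ)
    (A B : Matrix (Fin n × ι) (Fin n × ι) ℝ) : Matrix (Fin n × ι) (Fin n × ι) ℝ :=
  fun p q => (1 - κ)⁻¹ * s₁ p.1 * s₃ q.1 *
    ∑ r, W (π₁ p.1) (π₃ q.1) r *
      g (fun a b => ∑ k, ∑ l, U (π₁ k) (π₂ l) r * s₁ k * s₂ l * A (k, a) (l, b))
        (fun a b => ∑ k', ∑ l', V (π₂ k') (π₃ l') r * s₂ k' * s₃ l' * B (k', a) (l', b))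
        p.2 q.2

/-- The recursive randomized bilinear computation F̂^{(Q)}, with sign functions
`s i q` and permutations `π i q` (i ∈ {1,2,3} levels q ∈ {1,…,Q}); at level 0 the
standard matrix product is used. -/
noncomputable def FhatRec {n R : ℕ} (m : ℕ) (U V W : Fin n → Fin n → Fin R → ℝ) :
    (Q : ℕ) → (s : Fin 3 → Fin Q → Fin n → ℝ) → (π : Fin 3 → Fin Q → Equiv.Perm (Fin n)) →
    Matrix (BIdx m n Q) (BIdx m n Q) ℝ → Matrix (BIdx m n Q) (BIdx m n Q) ℝ →
    Matrix (BIdx m n Q) (BIdx m n Q) ℝ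
  | 0, _, _, A, B => A * B
  | (Q + 1), s, π, A, B =>
      stepR U V W (kappa U V W)
        (s 0 (Fin.last Q)) (s 1 (Fin.last Q)) (s 2 (Fin.last Q))
        (π 0 (Fin.last Q)) (π 1 (Fin.last Q)) (π 2 (Fin.last Q))
        (FhatRec m U V W Q (fun i q => s i q.castSucc) (fun i q => π i q.castSucc))
        A B

section Helpers

lemma sum_es_mul (n : ℕ) (a b : Fin n) :
    ∑ σ : Fin n → Bool, (if σ a then (1:ℝ) else -1) * (if σ b then (1:ℝ) else -1)
      = if a = b then (2^n : ℝ) else 0 := by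
  by_cases h : a = b
  · subst h
    rw [if_pos rfl]
    have h1 : ∀ σ : Fin n → Bool, (if σ a then (1:ℝ) else -1) * (if σ a then (1:ℝ) else -1) = 1 :=
      fun σ => by by_cases hσ : σ a <;> simp [hσ]
    rw [Finset.sum_congr rfl fun σ _ => h1 σ, Finset.sum_const, Finset.card_univ]
    simp [Fintype.card_fun]
  · rw [if_neg h]
    have inv : Function.Involutive (fun σ : Fin n → Bool => Function.update σ a (!σ a)) := by
      intro σ; funext j
      rcases eq_or_ne j a with rfl | hj
      · simp
      · simp [Function.update_of_ne hj]
    set e : Equiv.Perm (Fin n → Bool) := Function.Involutive.toPerm _ inv with he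
    have key := Equiv.sum_comp e
      (fun σ : Fin n → Bool => (if σ a then (1:ℝ) else -1) * (if σ b then (1:ℝ) else -1))
    have h2 : ∀ σ : Fin n → Bool,
        (if (e σ) a then (1:ℝ) else -1) * (if (e σ) b then (1:ℝ) else -1)
          = - ((if σ a then (1:ℝ) else -1) * (if σ b then (1:ℝ) else -1)) := by
      intro σ
      have ha : (e σ) a = !σ a := by
        simp [he, Function.Involutive.toPerm, Function.update_self]
      have hb : (e σ) b = σ b := by
        simp [he, Function.Involutive.toPerm, Function.update_of_ne (fun hh => h hh.symm : b ≠ a)]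
      rw [ha, hb]; cases hσ : σ a <;> cases hσ' : σ b <;> norm_num
    rw [Finset.sum_congr rfl fun σ _ => h2 σ] at key
    rw [Finset.sum_neg_distrib] at key
    linarith

lemma sum_perm_comp {n : ℕ} (t : Fin (n+1)) (c : Fin (n+1) → ℝ) :
    ∑ π : Equiv.Perm (Fin (n+1)), c (π t) = (n.factorial : ℝ) * ∑ x, c x := by
  have h1 : ∑ π : Equiv.Perm (Fin (n+1)), c (π t)
      = ∑ π : Equiv.Perm (Fin (n+1)), c (π 0) := by
    rw [← Equiv.sum_comp (Equiv.mulRight (Equiv.swap 0 t)) (fun π => c (π t))]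
    refine Finset.sum_congr rfl fun π _ => ?_
    simp [Equiv.Perm.mul_apply, Equiv.swap_apply_right]
  rw [h1, ← Equiv.sum_comp (Equiv.Perm.decomposeFin.symm) (fun π => c (π 0)),
    Fintype.sum_prod_type]
  simp [Equiv.Perm.decomposeFin_symm_apply_zero, Finset.sum_const, Finset.card_univ,
    Fintype.card_perm, Finset.mul_sum, mul_comm]

lemma perm_triple {n R : ℕ} (U V W : Fin (n+1) → Fin (n+1) → Fin R → ℝ) (x y z : Fin (n+1)) :
    ∑ π₁ : Equiv.Perm (Fin (n+1)), ∑ π₂ : Equiv.Perm (Fin (n+1)), ∑ π₃ : Equiv.Perm (Fin (n+1)),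
      ∑ r, U (π₁ x) (π₂ y) r * V (π₂ y) (π₃ z) r * W (π₁ x) (π₃ z) r
    = (n.factorial : ℝ)^3 * ∑ i, ∑ c, ∑ j, ∑ r, U i c r * V c j r * W i j r := by
  rw [sum_perm_comp x (fun i => ∑ π₂ : Equiv.Perm (Fin (n+1)), ∑ π₃ : Equiv.Perm (Fin (n+1)),
    ∑ r, U i (π₂ y) r * V (π₂ y) (π₃ z) r * W i (π₃ z) r)]
  have h2 : ∀ i, ∑ π₂ : Equiv.Perm (Fin (n+1)), ∑ π₃ : Equiv.Perm (Fin (n+1)),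
      ∑ r, U i (π₂ y) r * V (π₂ y) (π₃ z) r * W i (π₃ z) r
      = (n.factorial : ℝ) * ∑ c, ∑ π₃ : Equiv.Perm (Fin (n+1)),
          ∑ r, U i c r * V c (π₃ z) r * W i (π₃ z) r :=
    fun i => sum_perm_comp y (fun c => ∑ π₃ : Equiv.Perm (Fin (n+1)),
      ∑ r, U i c r * V c (π₃ z) r * W i (π₃ z) r)
  simp only [h2]
  have h3 : ∀ i c, ∑ π₃ : Equiv.Perm (Fin (n+1)),
      ∑ r, U i c r * V c (π₃ z) r * W i (π₃ z) r
      = (n.factorial : ℝ) * ∑ j, ∑ r, U i c r * V c j r * W i j r :=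
    fun i c => sum_perm_comp z (fun j => ∑ r, U i c r * V c j r * W i j r)
  simp only [h3]
  simp only [Finset.mul_sum, ← Finset.sum_mul]
  refine Finset.sum_congr rfl fun i _ => ?_
  refine Finset.sum_congr rfl fun c _ => ?_
  refine Finset.sum_congr rfl fun j _ => ?_
  refine Finset.sum_congr rfl fun r _ => ?_
  ring

lemma kappa_identity {n R : ℕ} (hn : 0 < n) (U V W : Fin n → Fin n → Fin R → ℝ) :
    ∑ i, ∑ c, ∑ j, ∑ r, U i c r * V c j r * W i j r = (n:ℝ)^3 * (1 - kappa U V W) := by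
  have hn3 : ((n:ℝ)^3) ≠ 0 := by positivity
  unfold kappa
  rw [mul_sub, mul_one, mul_inv_cancel_left₀ hn3]
  have hs : ∑ i, ∑ j, ∑ l, (1 - ∑ r, U i l r * V l j r * W i j r)
      = (n:ℝ)^3 - ∑ i, ∑ j, ∑ l, ∑ r, U i l r * V l j r * W i j r := by
    simp [Finset.sum_sub_distrib, Finset.sum_const, Finset.card_univ]
    ring
  rw [hs]
  have hswap : ∑ i, ∑ c, ∑ j, ∑ r, U i c r * V c j r * W i j r
      = ∑ i, ∑ j, ∑ l, ∑ r, U i l r * V l j r * W i j r :=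
    Finset.sum_congr rfl fun i _ => Finset.sum_comm
  rw [hswap]; ring

lemma mul_fun_apply {ι : Type} [Fintype ι] (M N : ι → ι → ℝ) (a b : ι) :
    @HMul.hMul (Matrix ι ι ℝ) (Matrix ι ι ℝ) (Matrix ι ι ℝ) _ M N a b = ∑ j, M a j * N j b :=
  Matrix.mul_apply

def tripleEquiv (X : Type*) : (Fin 3 → X) ≃ X × X × X where
  toFun t := (t 0, t 1, t 2)
  invFun x := ![x.1, x.2.1, x.2.2]
  left_inv t := by funext i; fin_cases i <;> rfl
  right_inv x := rfl

end Helpers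


lemma sum_reorder12 {A1 A2 A3 A4 A5 A6 A7 A8 A9 A10 A11 A12 : Type*}
    [Fintype A1] [Fintype A2] [Fintype A3] [Fintype A4] [Fintype A5] [Fintype A6]
    [Fintype A7] [Fintype A8] [Fintype A9] [Fintype A10] [Fintype A11] [Fintype A12]
    (f : A1 → A2 → A3 → A4 → A5 → A6 → A7 → A8 → A9 → A10 → A11 → A12 → ℝ) :
    ∑ x1 : A1, ∑ x2 : A2, ∑ x3 : A3, ∑ x4 : A4, ∑ x5 : A5, ∑ x6 : A6, ∑ x7 : A7,
      ∑ x8 : A8, ∑ x9 : A9, ∑ x10 : A10, ∑ x11 : A11, ∑ x12 : A12,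
        f x1 x2 x3 x4 x5 x6 x7 x8 x9 x10 x11 x12
    = ∑ x12 : A12, ∑ x11 : A11, ∑ x9 : A9, ∑ x10 : A10, ∑ x4 : A4, ∑ x5 : A5, ∑ x6 : A6,
        ∑ x7 : A7, ∑ x8 : A8, ∑ x1 : A1, ∑ x2 : A2, ∑ x3 : A3,
        f x1 x2 x3 x4 x5 x6 x7 x8 x9 x10 x11 x12 := by
  trans (∑ x : A1 × A2 × A3 × A4 × A5 × A6 × A7 × A8 × A9 × A10 × A11 × A12,
    f x.1 x.2.1 x.2.2.1 x.2.2.2.1 x.2.2.2.2.1 x.2.2.2.2.2.1 x.2.2.2.2.2.2.1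
      x.2.2.2.2.2.2.2.1 x.2.2.2.2.2.2.2.2.1 x.2.2.2.2.2.2.2.2.2.1
      x.2.2.2.2.2.2.2.2.2.2.1 x.2.2.2.2.2.2.2.2.2.2.2)
  · simp only [Fintype.sum_prod_type]
  trans (∑ y : A12 × A11 × A9 × A10 × A4 × A5 × A6 × A7 × A8 × A1 × A2 × A3,
    f y.2.2.2.2.2.2.2.2.2.1 y.2.2.2.2.2.2.2.2.2.2.1 y.2.2.2.2.2.2.2.2.2.2.2
      y.2.2.2.2.1 y.2.2.2.2.2.1 y.2.2.2.2.2.2.1 y.2.2.2.2.2.2.2.1 y.2.2.2.2.2.2.2.2.1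
      y.2.2.1 y.2.2.2.1 y.2.1 y.1)
  · refine Fintype.sum_equiv
      (⟨fun x => ⟨x.2.2.2.2.2.2.2.2.2.2.2, x.2.2.2.2.2.2.2.2.2.2.1, x.2.2.2.2.2.2.2.2.1,
          x.2.2.2.2.2.2.2.2.2.1, x.2.2.2.1, x.2.2.2.2.1, x.2.2.2.2.2.1, x.2.2.2.2.2.2.1,
          x.2.2.2.2.2.2.2.1, x.1, x.2.1, x.2.2.1⟩,
        fun y => ⟨y.2.2.2.2.2.2.2.2.2.1, y.2.2.2.2.2.2.2.2.2.2.1, y.2.2.2.2.2.2.2.2.2.2.2,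
          y.2.2.2.2.1, y.2.2.2.2.2.1, y.2.2.2.2.2.2.1, y.2.2.2.2.2.2.2.1,
          y.2.2.2.2.2.2.2.2.1, y.2.2.1, y.2.2.2.1, y.2.1, y.1⟩,
        fun x => rfl, fun y => rfl⟩) _ _ (fun x => rfl)
  · simp only [Fintype.sum_prod_type]


set_option maxHeartbeats 4000000 in
lemma step_expect {n R : ℕ} {ι : Type} [Fintype ι] (hn : 0 < n)
    (U V W : Fin n → Fin n → Fin R → ℝ) (hκ : kappa U V W ≠ 1)
    (A B : Matrix (Fin n × ι) (Fin n × ι) ℝ) :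
    ∑ t : Fin 3 → Fin n → Bool, ∑ p : Fin 3 → Equiv.Perm (Fin n),
      stepR U V W (kappa U V W)
        (fun j => if t 0 j then (1:ℝ) else -1) (fun j => if t 1 j then (1:ℝ) else -1)
        (fun j => if t 2 j then (1:ℝ) else -1) (p 0) (p 1) (p 2)
        (· * ·) A B
      = ((2 ^ (3*n) * Nat.factorial n ^ 3 : ℕ) : ℝ) • (A * B) := by
  obtain ⟨n', rfl⟩ : ∃ n', n = n' + 1 := ⟨n - 1, (Nat.succ_pred_eq_of_pos hn).symm⟩
  have htrans : ∑ t : Fin 3 → Fin (n'+1) → Bool, ∑ p : Fin 3 → Equiv.Perm (Fin (n'+1)),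
      stepR U V W (kappa U V W)
        (fun j => if t 0 j then (1:ℝ) else -1) (fun j => if t 1 j then (1:ℝ) else -1)
        (fun j => if t 2 j then (1:ℝ) else -1) (p 0) (p 1) (p 2)
        (· * ·) A B
      = ∑ x : (Fin (n'+1) → Bool) × (Fin (n'+1) → Bool) × (Fin (n'+1) → Bool),
          ∑ y : Equiv.Perm (Fin (n'+1)) × Equiv.Perm (Fin (n'+1)) × Equiv.Perm (Fin (n'+1)),
          stepR U V W (kappa U V W)
            (fun j => if x.1 j then (1:ℝ) else -1) (fun j => if x.2.1 j then (1:ℝ) else -1)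
            (fun j => if x.2.2 j then (1:ℝ) else -1) y.1 y.2.1 y.2.2
            (· * ·) A B :=
    Fintype.sum_equiv (tripleEquiv _) _ _ fun t =>
      Fintype.sum_equiv (tripleEquiv _) _ _ fun p => rfl
  rw [htrans]
  simp only [Fintype.sum_prod_type]
  ext i j
  obtain ⟨p₁, a⟩ := i
  obtain ⟨q₁, b⟩ := j
  simp only [Matrix.sum_apply, Matrix.smul_apply, smul_eq_mul]
  simp (config := { maxSteps := 10000000 }) only [stepR, Matrix.mul_apply, mul_fun_apply,
    Finset.sum_mul, Finset.mul_sum]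
  trans (∑ σ₁ : Fin (n'+1) → Bool, ∑ σ₂ : Fin (n'+1) → Bool, ∑ σ₃ : Fin (n'+1) → Bool,
      ∑ π₁ : Equiv.Perm (Fin (n'+1)), ∑ π₂ : Equiv.Perm (Fin (n'+1)),
      ∑ π₃ : Equiv.Perm (Fin (n'+1)), ∑ r : Fin R, ∑ z : ι,
      ∑ k' : Fin (n'+1), ∑ l' : Fin (n'+1), ∑ k : Fin (n'+1), ∑ l : Fin (n'+1),
      ((if σ₁ p₁ then (1:ℝ) else -1) * (if σ₁ k then (1:ℝ) else -1)) *
       (((if σ₂ l then (1:ℝ) else -1) * (if σ₂ k' then (1:ℝ) else -1)) *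
        (((if σ₃ q₁ then (1:ℝ) else -1) * (if σ₃ l' then (1:ℝ) else -1)) *
         ((1 - kappa U V W)⁻¹ * (U (π₁ k) (π₂ l) r * (V (π₂ k') (π₃ l') r *
           (W (π₁ p₁) (π₃ q₁) r * (A (k, a) (l, z) * B (k', z) (l', b)))))))))
  · refine Finset.sum_congr rfl fun σ₁ _ => Finset.sum_congr rfl fun σ₂ _ =>
      Finset.sum_congr rfl fun σ₃ _ => Finset.sum_congr rfl fun π₁ _ =>
      Finset.sum_congr rfl fun π₂ _ => Finset.sum_congr rfl fun π₃ _ =>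
      Finset.sum_congr rfl fun r _ => Finset.sum_congr rfl fun z _ =>
      Finset.sum_congr rfl fun k' _ => Finset.sum_congr rfl fun l' _ =>
      Finset.sum_congr rfl fun k _ => Finset.sum_congr rfl fun l _ => ?_
    ring
  rw [sum_reorder12]
  simp only [← Finset.mul_sum, ← Finset.sum_mul, sum_es_mul]
  simp only [ite_mul, mul_ite, zero_mul, mul_zero, Finset.sum_ite_irrel, Finset.sum_const_zero,
    Finset.sum_ite_eq, Finset.mem_univ, if_true]
  have hz : ∀ x : Fin (n'+1), ∑ π₁ : Equiv.Perm (Fin (n'+1)), ∑ π₂ : Equiv.Perm (Fin (n'+1)),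
      ∑ π₃ : Equiv.Perm (Fin (n'+1)), ∑ r : Fin R,
        U (π₁ p₁) (π₂ x) r * (V (π₂ x) (π₃ q₁) r * (W (π₁ p₁) (π₃ q₁) r *
          ∑ z : ι, A (p₁, a) (x, z) * B (x, z) (q₁, b)))
      = ((n'.factorial : ℝ)^3 * ((((n' : ℝ)+1))^3 * (1 - kappa U V W))) *
          ∑ z : ι, A (p₁, a) (x, z) * B (x, z) (q₁, b) := by
    intro x
    have hk := kappa_identity (Nat.succ_pos n') U V W
    push_cast at hk
    rw [← hk, ← perm_triple U V W p₁ x q₁]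
    simp only [Finset.sum_mul]
    refine Finset.sum_congr rfl fun π₁ _ => Finset.sum_congr rfl fun π₂ _ =>
      Finset.sum_congr rfl fun π₃ _ => Finset.sum_congr rfl fun r _ => ?_
    ring
  simp only [hz]
  simp only [← Finset.mul_sum]
  rw [Fintype.sum_prod_type]
  have h1 : (1:ℝ) - kappa U V W ≠ 0 := sub_ne_zero.mpr (Ne.symm hκ)
  have hsc : ∀ S : ℝ, (2:ℝ) ^ (n' + 1) * ((2:ℝ) ^ (n' + 1) * ((2:ℝ) ^ (n' + 1) *
      ((1 - kappa U V W)⁻¹ * ((n'.factorial : ℝ) ^ 3 * (((n':ℝ) + 1) ^ 3 * (1 - kappa U V W)) * S))))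
      = ((2 ^ (3 * (n' + 1)) * (n' + 1).factorial ^ 3 : ℕ) : ℝ) * S := by
    intro S
    push_cast [Nat.factorial_succ]
    field_simp
    ring
  exact hsc _


lemma stepR_sum_smul {n R : ℕ} {ι : Type} [Fintype ι] (U V W : Fin n → Fin n → Fin R → ℝ)
    (κ c : ℝ) (s₁ s₂ s₃ : Fin n → ℝ) (π₁ π₂ π₃ : Equiv.Perm (Fin n))
    {γ₁ γ₂ : Type} [Fintype γ₁] [Fintype γ₂]
    (g : γ₁ → γ₂ → Matrix ι ι ℝ → Matrix ι ι ℝ → Matrix ι ι ℝ)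
    (hg : ∀ X Y : Matrix ι ι ℝ, ∑ x : γ₁, ∑ y : γ₂, g x y X Y = c • (X * Y))
    (A B : Matrix (Fin n × ι) (Fin n × ι) ℝ) :
    ∑ x : γ₁, ∑ y : γ₂, stepR U V W κ s₁ s₂ s₃ π₁ π₂ π₃ (g x y) A B
      = c • stepR U V W κ s₁ s₂ s₃ π₁ π₂ π₃ (· * ·) A B := by
  have hg' : ∀ (X Y : Matrix ι ι ℝ) (u v : ι),
      ∑ x : γ₁, ∑ y : γ₂, g x y X Y u v = c * (X * Y) u v := by
    intro X Y u v
    have h := congrFun (congrFun (hg X Y) u) v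
    simpa [Matrix.sum_apply, Matrix.smul_apply] using h
  have swap : ∀ (F : γ₁ → γ₂ → Fin R → ℝ),
      ∑ x : γ₁, ∑ y : γ₂, ∑ r : Fin R, F x y r = ∑ r : Fin R, ∑ x : γ₁, ∑ y : γ₂, F x y r :=
    fun F => (Finset.sum_congr rfl fun x _ => Finset.sum_comm).trans Finset.sum_comm
  ext p q
  simp only [Matrix.sum_apply, Matrix.smul_apply, smul_eq_mul, stepR]
  simp only [Finset.mul_sum]
  rw [swap]
  refine Finset.sum_congr rfl fun r _ => ?_
  simp only [← Finset.mul_sum]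
  erw [hg']
  ring


def splitE (Q : ℕ) (α : Type*) : ((Fin 3 → α) × (Fin 3 → Fin Q → α)) ≃ (Fin 3 → Fin (Q+1) → α) where
  toFun x := fun i => Fin.snoc (x.2 i) (x.1 i)
  invFun f := (fun i => f i (Fin.last Q), fun i q => f i q.castSucc)
  left_inv x := by
    obtain ⟨l, s⟩ := x
    simp only [Prod.mk.injEq]
    constructor
    · funext i; simp
    · funext i q; simp
  right_inv f := by
    funext i q
    refine Fin.lastCases ?_ ?_ q <;> simp

set_option maxHeartbeats 2000000 in
lemma aux_expect {n R : ℕ} (m : ℕ) (hn : 0 < n) (U V W : Fin n → Fin n → Fin R → ℝ)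
    (hκ : kappa U V W ≠ 1) :
    ∀ (Q : ℕ) (A B : Matrix (BIdx m n Q) (BIdx m n Q) ℝ),
    ∑ ω : (Fin 3 → Fin Q → Fin n → Bool) × (Fin 3 → Fin Q → Equiv.Perm (Fin n)),
        FhatRec m U V W Q (fun i q j => if ω.1 i q j then (1 : ℝ) else -1) ω.2 A B
      = ((2 ^ (3 * Q * n) * Nat.factorial n ^ (3 * Q) : ℕ) : ℝ) • (A * B) := by
  intro Q
  induction Q with
  | zero =>
      intro A B
      simp only [FhatRec]
      rw [Finset.sum_const, Finset.card_univ]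
      simp [Fintype.card_fun]
  | succ Q IH =>
      intro (A : Matrix (Fin n × BIdx m n Q) (Fin n × BIdx m n Q) ℝ)
        (B : Matrix (Fin n × BIdx m n Q) (Fin n × BIdx m n Q) ℝ)
      show ∑ ω : (Fin 3 → Fin (Q+1) → Fin n → Bool) × (Fin 3 → Fin (Q+1) → Equiv.Perm (Fin n)),
          stepR U V W (kappa U V W) (fun j => if ω.1 0 (Fin.last Q) j then (1:ℝ) else -1)
            (fun j => if ω.1 1 (Fin.last Q) j then (1:ℝ) else -1)
            (fun j => if ω.1 2 (Fin.last Q) j then (1:ℝ) else -1)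
            (ω.2 0 (Fin.last Q)) (ω.2 1 (Fin.last Q)) (ω.2 2 (Fin.last Q))
            (FhatRec m U V W Q (fun i q j => if ω.1 i q.castSucc j then (1:ℝ) else -1)
              (fun i q => ω.2 i q.castSucc)) A B
        = ((2 ^ (3 * (Q+1) * n) * Nat.factorial n ^ (3 * (Q+1)) : ℕ) : ℝ) • (A * B)
      rw [← Equiv.sum_comp (Equiv.prodCongr (splitE Q (Fin n → Bool))
        (splitE Q (Equiv.Perm (Fin n))))]
      simp only [Equiv.prodCongr_apply, Prod.map, splitE, Equiv.coe_fn_mk, FhatRec,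
        Fin.snoc_last, Fin.snoc_castSucc]
      erw [Fintype.sum_prod_type]
      simp only [Fintype.sum_prod_type]
      refine Eq.trans (Finset.sum_congr rfl fun ls _ => Finset.sum_comm) ?_
      have hg : ∀ X Y : Matrix (BIdx m n Q) (BIdx m n Q) ℝ,
          ∑ is : Fin 3 → Fin Q → Fin n → Bool, ∑ ip : Fin 3 → Fin Q → Equiv.Perm (Fin n),
            FhatRec m U V W Q (fun i q j => if is i q j then (1:ℝ) else -1) ip X Y
          = ((2 ^ (3 * Q * n) * Nat.factorial n ^ (3 * Q) : ℕ) : ℝ) • (X * Y) := by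
        intro X Y
        have h := IH X Y
        rw [Fintype.sum_prod_type] at h
        simpa using h
      have hstep : ∀ (ls : Fin 3 → Fin n → Bool) (lp : Fin 3 → Equiv.Perm (Fin n)),
          ∑ is : Fin 3 → Fin Q → Fin n → Bool, ∑ ip : Fin 3 → Fin Q → Equiv.Perm (Fin n),
            stepR U V W (kappa U V W)
              (fun j => if ls 0 j then (1:ℝ) else -1) (fun j => if ls 1 j then (1:ℝ) else -1)
              (fun j => if ls 2 j then (1:ℝ) else -1) (lp 0) (lp 1) (lp 2)
              (FhatRec m U V W Q (fun i q j => if is i q j then (1:ℝ) else -1)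
                (fun i q => ip i q)) A B
          = ((2 ^ (3 * Q * n) * Nat.factorial n ^ (3 * Q) : ℕ) : ℝ) •
              stepR U V W (kappa U V W)
              (fun j => if ls 0 j then (1:ℝ) else -1) (fun j => if ls 1 j then (1:ℝ) else -1)
              (fun j => if ls 2 j then (1:ℝ) else -1) (lp 0) (lp 1) (lp 2) (· * ·) A B :=
        fun ls lp => stepR_sum_smul (ι := BIdx m n Q)
          (γ₁ := Fin 3 → Fin Q → Fin n → Bool) (γ₂ := Fin 3 → Fin Q → Equiv.Perm (Fin n))
          U V W (kappa U V W) ((2 ^ (3 * Q * n) * Nat.factorial n ^ (3 * Q) : ℕ) : ℝ)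
          (fun j => if ls 0 j then (1:ℝ) else -1) (fun j => if ls 1 j then (1:ℝ) else -1)
          (fun j => if ls 2 j then (1:ℝ) else -1) (lp 0) (lp 1) (lp 2)
          (fun is ip => FhatRec m U V W Q (fun i q j => if is i q j then (1:ℝ) else -1) ip)
          hg A B
      simp only [hstep]
      simp only [← Finset.smul_sum]
      rw [step_expect hn U V W hκ A B, smul_smul]
      rw [← Nat.cast_mul]
      congr 2
      push_cast
      ring
  

theorem stmt18 (n R m Q : ℕ) (hn : 0 < n) (hR : 0 < R) (hm : 1 ≤ m) (hQ : 1 ≤ Q)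
    (U V W : Fin n → Fin n → Fin R → ℝ) (hκ : kappa U V W ≠ 1)
    (A B : Matrix (BIdx m n Q) (BIdx m n Q) ℝ) :
    ((2 ^ (3 * Q * n) * Nat.factorial n ^ (3 * Q) : ℕ) : ℝ)⁻¹ •
      ∑ ω : (Fin 3 → Fin Q → Fin n → Bool) × (Fin 3 → Fin Q → Equiv.Perm (Fin n)),
        FhatRec m U V W Q (fun i q j => if ω.1 i q j then (1 : ℝ) else -1) ω.2 A B
      = A * B := by
  rw [aux_expect m hn U V W hκ Q A B, smul_smul, inv_mul_cancel₀, one_smul]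
  exact Nat.cast_ne_zero.mpr
    (Nat.mul_ne_zero (pow_ne_zero _ two_ne_zero) (pow_ne_zero _ n.factorial_ne_zero))
end
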